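/- arXiv:0708.2883 — 9 statements merged into one kernel-verified Lean document; each statement's English description precedes it below -/
import Mathlib

section
/- Every polynomial p that is strictly positive on [-1,1] admits a representation p(x) = Σ_{k=0}^N a_k (1-x)^k (1+x)^{N-k} with all coefficients a_k ≥ 0, for some N ∈ ℕ (Bernstein's theorem). -/
/-!
Write `s = 1 - x`, `t = 1 + x`. Nonnegative combinations of the `s ^ k * t ^ (N - k)` form a cone
`K_N`, and `K_N * K_M ⊆ K_{N+M}`. A real polynomial is a product of irreducible factors of degree
at most two; since `p` has no zero on `[-1, 1]`, each factor has constant sign there, so after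
sign changes `p` is a product of factors of degree at most two that are positive on `[-1, 1]`.

In `y = (1 - x) / 2 ∈ [0, 1]` such a factor is `Q y = a + b y + c y ^ 2`. By the moment
identities of the Bernstein polynomials, its coefficients in the degree-`n` Bernstein basis are
`Q y - c y (1 - y) / (n - 1)` at `y = k / n`, nonnegative once `n - 1 > |c| / min_{[0, 1]} Q`.
-/

open Polynomial

open scoped NNReal

noncomputable def bernsteinMonomial (N : ℕ) (k : Fin (N + 1)) : ℝ[X] :=
  (1 - X) ^ (k : ℕ) * (1 + X) ^ (N - k)

noncomputable def bernsteinCone (N : ℕ) : Submodule ℝ≥0 ℝ[X] :=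
  Submodule.span ℝ≥0 (Set.range (bernsteinMonomial N))

theorem bernsteinMonomial_mul {N M : ℕ} (i : Fin (N + 1)) (j : Fin (M + 1)) :
    bernsteinMonomial N i * bernsteinMonomial M j =
      bernsteinMonomial (N + M) ⟨i + j, by omega⟩ := by
  have hij : N + M - (i + j) = (N - i) + (M - j) := by omega
  simp only [bernsteinMonomial, hij, pow_add]
  ring

theorem bernsteinCone_mul_le (N M : ℕ) :
    bernsteinCone N * bernsteinCone M ≤ bernsteinCone (N + M) := by
  rw [bernsteinCone, bernsteinCone, Submodule.span_mul_span]
  refine Submodule.span_mono ?_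
  rintro _ ⟨_, ⟨i, rfl⟩, _, ⟨j, rfl⟩, rfl⟩
  exact ⟨_, (bernsteinMonomial_mul i j).symm⟩

theorem mul_mem_bernsteinCone {N M : ℕ} {p q : ℝ[X]} (hp : p ∈ bernsteinCone N)
    (hq : q ∈ bernsteinCone M) : p * q ∈ bernsteinCone (N + M) :=
  bernsteinCone_mul_le N M (Submodule.mul_mem_mul hp hq)

theorem smul_mem_bernsteinCone {N : ℕ} {r : ℝ} {p : ℝ[X]} (hr : 0 ≤ r)
    (hp : p ∈ bernsteinCone N) : r • p ∈ bernsteinCone N :=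
  (bernsteinCone N).smul_mem ⟨r, hr⟩ hp

theorem mem_bernsteinCone_iff {N : ℕ} {p : ℝ[X]} :
    p ∈ bernsteinCone N ↔ ∃ a : Fin (N + 1) → ℝ, (∀ k, 0 ≤ a k) ∧
      p = ∑ k : Fin (N + 1), C (a k) * (1 - X) ^ (k : ℕ) * (1 + X) ^ (N - (k : ℕ)) := by
  simp only [bernsteinCone, Submodule.mem_span_range_iff_exists_fun, NNReal.smul_def,
    smul_eq_C_mul, bernsteinMonomial, ← mul_assoc]
  constructor
  · rintro ⟨c, rfl⟩
    exact ⟨fun k => c k, fun k => (c k).2, rfl⟩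
  · rintro ⟨a, ha, rfl⟩
    exact ⟨fun k => ⟨a k, ha k⟩, rfl⟩

theorem aeval_bernsteinPolynomial_eq_smul_bernsteinMonomial {n k : ℕ} (hk : k < n + 1) :
    aeval (C (1 / 2) * (1 - X) : ℝ[X]) (bernsteinPolynomial ℝ n k) =
      ((n.choose k : ℝ) / 2 ^ n) • bernsteinMonomial n ⟨k, hk⟩ := by
  refine Polynomial.funext fun x => ?_
  simp only [bernsteinPolynomial, bernsteinMonomial, map_mul, map_pow, map_sub, map_natCast,
    aeval_X, map_one, eval_smul, eval_mul, eval_pow, eval_sub, eval_add, eval_one, eval_X,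
    eval_C, eval_natCast, smul_eq_mul]
  rw [show (1 : ℝ) - 1 / 2 * (1 - x) = (1 + x) / 2 by ring,
    show (1 : ℝ) / 2 * (1 - x) = (1 - x) / 2 by ring, div_pow, div_pow,
    ← Nat.add_sub_of_le (Nat.le_of_lt_succ hk), pow_add, Nat.add_sub_cancel_left]
  ring

theorem quadratic_eq_sum_bernsteinPolynomial {R : Type*} [Field R] [CharZero R] (a b c : R)
    {n : ℕ} (hn : 2 ≤ n) :
    a • 1 + b • X + c • X ^ 2 = ∑ k ∈ Finset.range (n + 1),
      (a + b * k / n + c * (k * (k - 1)) / (n * (n - 1))) • bernsteinPolynomial R n k := by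
  have hn₀ : (n : R) ≠ 0 := Nat.cast_ne_zero.2 (by omega)
  have hn₁ : (n : R) - 1 ≠ 0 := by
    rw [sub_ne_zero, ← Nat.cast_one, Ne, Nat.cast_inj]
    omega
  have cast_mul_pred (m : ℕ) : ((m * (m - 1) : ℕ) : R) = m * (m - 1 : R) := by
    cases m <;> simp
  have h₁ := bernsteinPolynomial.sum_smul R n
  have h₂ := bernsteinPolynomial.sum_mul_smul R n
  simp only [← Nat.cast_smul_eq_nsmul R, cast_mul_pred] at h₁ h₂
  calc a • 1 + b • X + c • X ^ 2
      = a • ∑ k ∈ Finset.range (n + 1), bernsteinPolynomial R n k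
        + (b / n) • ∑ k ∈ Finset.range (n + 1), (k : R) • bernsteinPolynomial R n k
        + (c / (n * (n - 1))) • ∑ k ∈ Finset.range (n + 1),
            ((k : R) * (k - 1)) • bernsteinPolynomial R n k := by
        rw [bernsteinPolynomial.sum, h₁, h₂, smul_smul, smul_smul]
        field_simp
    _ = _ := by
        simp only [Finset.smul_sum, smul_smul, ← Finset.sum_add_distrib, ← add_smul]
        refine Finset.sum_congr rfl fun k _ => ?_
        congr 1
        ring

theorem bernsteinCoeff_nonneg_of_quadratic_ge {a b c δ n k : ℝ}
    (hQ : ∀ y ∈ Set.Icc (0 : ℝ) 1, δ ≤ a + b * y + c * y ^ 2) (hδ : 0 < δ)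
    (hn : 1 + |c| / δ < n) (hk₀ : 0 ≤ k) (hkn : k ≤ n) :
    0 ≤ a + b * k / n + c * (k * (k - 1)) / (n * (n - 1)) := by
  have hcδ : |c| < δ * (n - 1) := by
    rw [← div_lt_iff₀' hδ]
    linarith
  have hn₁ : 0 < n - 1 := by linarith [div_nonneg (abs_nonneg c) hδ.le]
  have hn₀ : n ≠ 0 := by linarith
  set y := k / n with hy
  have hy₀ : 0 ≤ y := div_nonneg hk₀ (by linarith)
  have hy₁ : y ≤ 1 := div_le_one_of_le₀ hkn (by linarith)
  have hcoeff : a + b * k / n + c * (k * (k - 1)) / (n * (n - 1)) =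
      (a + b * y + c * y ^ 2) - c * (y * (1 - y)) / (n - 1) := by
    rw [hy]
    field_simp
    ring
  have herr : c * (y * (1 - y)) ≤ |c| := by
    have h : 0 ≤ y * (1 - y) := mul_nonneg hy₀ (by linarith)
    calc c * (y * (1 - y)) ≤ |c| * (y * (1 - y)) := mul_le_mul_of_nonneg_right (le_abs_self c) h
      _ ≤ |c| := mul_le_of_le_one_right (abs_nonneg c) (by nlinarith)
  rw [hcoeff, sub_nonneg, div_le_iff₀ hn₁]
  linarith [mul_le_mul_of_nonneg_right (hQ y ⟨hy₀, hy₁⟩) hn₁.le]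

theorem exists_mem_bernsteinCone_of_natDegree_le_two {q : ℝ[X]} (hq : q.natDegree ≤ 2)
    (hpos : ∀ x ∈ Set.Icc (-1 : ℝ) 1, 0 < q.eval x) : ∃ N, q ∈ bernsteinCone N := by
  set Y : ℝ[X] := C (1 / 2) * (1 - X)
  obtain ⟨a, b, c, hq⟩ : ∃ a b c : ℝ, q = aeval Y (a • 1 + b • X + c • X ^ 2 : ℝ[X]) := by
    refine ⟨q.coeff 0 + q.coeff 1 + q.coeff 2, -2 * q.coeff 1 - 4 * q.coeff 2, 4 * q.coeff 2, ?_⟩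
    conv_lhs => rw [q.as_sum_range' 3 (by omega)]
    refine Polynomial.funext fun x => ?_
    simp only [Finset.sum_range_succ, Finset.range_one, Finset.sum_singleton, monomial_zero_left,
      eval_add, eval_C, eval_monomial, pow_one, map_add, map_smul, map_one, aeval_X, map_pow,
      eval_smul, eval_one, smul_eq_mul, mul_one, eval_mul, eval_sub, eval_X, eval_pow, Y]
    ring
  have hQ : ∀ y ∈ Set.Icc (0 : ℝ) 1, 0 < a + b * y + c * y ^ 2 := fun y hy => by
    simpa [hq, Y, map_smul, aeval_X] using
      hpos (1 - 2 * y) ⟨by linarith [hy.2], by linarith [hy.1]⟩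
  obtain ⟨y₀, hy₀, hmin⟩ := isCompact_Icc.exists_isMinOn (Set.nonempty_Icc.2 zero_le_one)
    (f := fun y : ℝ => a + b * y + c * y ^ 2) (by fun_prop)
  obtain ⟨n, hn⟩ := exists_nat_gt (1 + |c| / (a + b * y₀ + c * y₀ ^ 2))
  have hn2 : 2 ≤ n := by
    have := div_nonneg (abs_nonneg c) (hQ y₀ hy₀).le
    exact_mod_cast (show (1 : ℝ) < n by linarith)
  refine ⟨n, ?_⟩
  rw [hq, quadratic_eq_sum_bernsteinPolynomial a b c hn2, map_sum]
  refine Submodule.sum_mem _ fun k hk => ?_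
  rw [map_smul, aeval_bernsteinPolynomial_eq_smul_bernsteinMonomial (Finset.mem_range.1 hk), smul_smul]
  refine smul_mem_bernsteinCone (mul_nonneg ?_ (by positivity)) (Submodule.subset_span ⟨_, rfl⟩)
  exact bernsteinCoeff_nonneg_of_quadratic_ge (fun y hy => hmin hy) (hQ y₀ hy₀) hn
    (by positivity) (by exact_mod_cast Nat.lt_succ_iff.1 (Finset.mem_range.1 hk))

theorem IsPreconnected.forall_pos_or_forall_neg {α β : Type*} [TopologicalSpace α]
    [LinearOrder β] [TopologicalSpace β] [OrderClosedTopology β] [Zero β] {s : Set α}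
    {f : α → β} (hs : IsPreconnected s) (hf : ContinuousOn f s) (h₀ : ∀ x ∈ s, f x ≠ 0) :
    (∀ x ∈ s, 0 < f x) ∨ (∀ x ∈ s, f x < 0) := by
  by_contra! h
  obtain ⟨⟨a, ha, hfa⟩, ⟨b, hb, hfb⟩⟩ := h
  obtain ⟨c, hc, hfc⟩ := hs.intermediate_value ha hb hf ⟨hfa, hfb⟩
  exact h₀ c hc hfc

theorem exists_factor_natDegree_le_two_of_pos {p : ℝ[X]} (hdeg : 0 < p.natDegree)
    (hp : ∀ x ∈ Set.Icc (-1 : ℝ) 1, 0 < p.eval x) :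
    ∃ q r : ℝ[X], p = q * r ∧ q.natDegree ≤ 2 ∧ r.natDegree < p.natDegree ∧
      (∀ x ∈ Set.Icc (-1 : ℝ) 1, 0 < q.eval x) ∧ (∀ x ∈ Set.Icc (-1 : ℝ) 1, 0 < r.eval x) := by
  have hp₀ : p ≠ 0 := by rintro rfl; simp at hdeg
  obtain ⟨q, hirr, r, rfl⟩ :=
    WfDvdMonoid.exists_irreducible_factor (not_isUnit_of_natDegree_pos p hdeg) hp₀
  have hr₀ : r ≠ 0 := right_ne_zero_of_mul hp₀
  have hrdeg : r.natDegree < (q * r).natDegree := by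
    rw [natDegree_mul hirr.ne_zero hr₀]
    linarith [hirr.natDegree_pos]
  have hq₀ : ∀ x ∈ Set.Icc (-1 : ℝ) 1, q.eval x ≠ 0 := fun x hx h => by
    simpa [h] using (hp x hx).ne'
  rcases isPreconnected_Icc.forall_pos_or_forall_neg q.continuousOn hq₀ with hq | hq
  · refine ⟨q, r, rfl, hirr.natDegree_le_two, hrdeg, hq, fun x hx => ?_⟩
    exact pos_of_mul_pos_right (by simpa using hp x hx) (hq x hx).le
  · refine ⟨-q, -r, by ring, by simpa using hirr.natDegree_le_two, by simpa using hrdeg,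
      fun x hx => by simpa using hq x hx, fun x hx => ?_⟩
    have h := hp x hx
    rw [eval_mul] at h
    simpa using neg_of_mul_pos_right h (hq x hx).le

theorem exists_mem_bernsteinCone_of_pos {p : ℝ[X]}
    (hp : ∀ x ∈ Set.Icc (-1 : ℝ) 1, 0 < p.eval x) : ∃ N, p ∈ bernsteinCone N := by
  induction hn : p.natDegree using Nat.strong_induction_on generalizing p with
  | _ n ih =>
    rcases le_or_gt n 2 with hn2 | hn2
    · exact exists_mem_bernsteinCone_of_natDegree_le_two (hn ▸ hn2) hp
    obtain ⟨q, r, rfl, hq2, hr, hq, hrpos⟩ := exists_factor_natDegree_le_two_of_pos (by omega) hp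
    obtain ⟨N, hN⟩ := exists_mem_bernsteinCone_of_natDegree_le_two hq2 hq
    obtain ⟨M, hM⟩ := ih _ (hn ▸ hr) hrpos rfl
    exact ⟨N + M, mul_mem_bernsteinCone hN hM⟩

/-- Bernstein's theorem: every polynomial strictly positive on `[-1,1]` can be written as
`p(x) = Σ_{k=0}^N a_k (1-x)^k (1+x)^{N-k}` with all `a_k ≥ 0`, for some `N ∈ ℕ`. -/
theorem bernstein_positive_representation (p : Polynomial ℝ)
    (hp : ∀ x ∈ Set.Icc (-1 : ℝ) 1, 0 < p.eval x) :
    ∃ (N : ℕ) (a : Fin (N + 1) → ℝ), (∀ k, 0 ≤ a k) ∧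
      p = ∑ k : Fin (N + 1), C (a k) * (1 - X) ^ (k : ℕ) * (1 + X) ^ (N - (k : ℕ)) := by
  obtain ⟨N, hN⟩ := exists_mem_bernsteinCone_of_pos hp
  exact ⟨N, mem_bernsteinCone_iff.1 hN⟩
end

section
/- If a real polynomial p of degree n is nonnegative on [-1,1] and has no zeros in the closed complex unit disk, then p can be written as p(x) = Σ_{k=0}^n a_k (1-x)^k (1+x)^{n-k} with all a_k ≥ 0; i.e., its Lorentz degree equals its ordinary degree (Lorentz's theorem). -/
/-!
Encoding the coefficients `a_k` as those of a polynomial `A`, the sum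
`Σ a_k (1 - x)^k (1 + x)^(n - k)` equals `(1 + x)^n A((1 - x) / (1 + x))`, so representations
multiply. It therefore suffices to represent the real factors of `p` of degree one and two. A real
root `r` with `|r| > 1` gives the factor `±(x - r)`; a pair of roots `z, z̄` off the real line with
`|z| > 1` gives `x² - 2 Re z x + |z|²`, and `|z|² ≥ 1`, `|2 Re z| ≤ 1 + |z|²` are exactly the
conditions for its representation to have nonnegative coefficients. Each such factor is positive
at `0`, so the cofactor is again positive there and induction on the degree applies.
-/

open Polynomial Finset

noncomputable def lorentzForm (n : ℕ) (A : ℝ[X]) : ℝ[X] :=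
  ∑ k ∈ range (n + 1), C (A.coeff k) * (1 - X) ^ k * (1 + X) ^ (n - k)

def HasLorentzRep (n : ℕ) (p : ℝ[X]) : Prop :=
  ∃ A : ℝ[X], (∀ k, 0 ≤ A.coeff k) ∧ A.natDegree ≤ n ∧ p = lorentzForm n A

lemma eval_lorentzForm {x : ℝ} (hx : 1 + x ≠ 0) {n : ℕ} {A : ℝ[X]} (hA : A.natDegree ≤ n) :
    (lorentzForm n A).eval x = (1 + x) ^ n * A.eval ((1 - x) / (1 + x)) := by
  rw [eval_eq_sum_range' (Nat.lt_succ_of_le hA), lorentzForm, mul_sum]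
  simp only [eval_finsetSum, eval_mul, eval_pow, eval_add, eval_sub, eval_one, eval_X, eval_C]
  refine sum_congr rfl fun k hk => ?_
  rw [pow_sub₀ _ hx (Nat.lt_succ_iff.mp (mem_range.mp hk)), div_pow]
  field_simp

lemma lorentzForm_mul {m n : ℕ} {A B : ℝ[X]} (hA : A.natDegree ≤ m) (hB : B.natDegree ≤ n) :
    lorentzForm m A * lorentzForm n B = lorentzForm (m + n) (A * B) := by
  have hAB : (A * B).natDegree ≤ m + n := natDegree_mul_le.trans (add_le_add hA hB)
  refine eq_of_infinite_eval_eq _ _ (((Set.finite_singleton (-1 : ℝ)).infinite_compl).mono ?_)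
  intro x hx
  have hx' : 1 + x ≠ 0 := fun h => hx (by rw [Set.mem_singleton_iff]; linarith)
  simp only [Set.mem_ofPred_eq, eval_mul, eval_lorentzForm hx' hA, eval_lorentzForm hx' hB,
    eval_lorentzForm hx' hAB, pow_add]
  ring

namespace HasLorentzRep

lemma mul {m n : ℕ} {p q : ℝ[X]} (hp : HasLorentzRep m p) (hq : HasLorentzRep n q) :
    HasLorentzRep (m + n) (p * q) := by
  obtain ⟨A, hA, hAm, rfl⟩ := hp
  obtain ⟨B, hB, hBn, rfl⟩ := hq
  refine ⟨A * B, fun k => ?_, natDegree_mul_le.trans (add_le_add hAm hBn), lorentzForm_mul hAm hBn⟩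
  rw [coeff_mul]
  exact sum_nonneg fun _ _ => mul_nonneg (hA _) (hB _)

lemma eval_zero_nonneg {n : ℕ} {p : ℝ[X]} (hp : HasLorentzRep n p) : 0 ≤ p.eval 0 := by
  obtain ⟨A, hA, -, rfl⟩ := hp
  simpa [lorentzForm, eval_finsetSum] using sum_nonneg fun k _ => hA k

end HasLorentzRep

lemma hasLorentzRep_C {c : ℝ} (hc : 0 ≤ c) : HasLorentzRep 0 (C c) :=
  ⟨C c, fun k => by rw [coeff_C]; split_ifs <;> simp [hc], by simp, by simp [lorentzForm]⟩

lemma hasLorentzRep_X_sub_C {r : ℝ} (hr : r < -1) : HasLorentzRep 1 (X - C r) := by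
  refine ⟨C ((1 - r) / 2) + C ((-1 - r) / 2) * X, fun k => ?_, by compute_degree, ?_⟩
  · simp only [coeff_add, coeff_C, coeff_C_mul_X]
    split_ifs <;> linarith
  · refine Polynomial.funext fun x => ?_
    simp [lorentzForm, sum_range_succ, coeff_C, coeff_X]
    ring

lemma hasLorentzRep_C_sub_X {r : ℝ} (hr : 1 < r) : HasLorentzRep 1 (C r - X) := by
  refine ⟨C ((r - 1) / 2) + C ((r + 1) / 2) * X, fun k => ?_, by compute_degree, ?_⟩
  · simp only [coeff_add, coeff_C, coeff_C_mul_X]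
    split_ifs <;> linarith
  · refine Polynomial.funext fun x => ?_
    simp [lorentzForm, sum_range_succ, coeff_C, coeff_X]
    ring

-- `lorentzForm 2 (c₀ + c₁ X + c₂ X²) = (c₀ + c₁ + c₂) + 2 (c₀ - c₂) X + (c₀ - c₁ + c₂) X²`.
lemma hasLorentzRep_quadratic {b c : ℝ} (hc : 1 ≤ c) (hb : |b| ≤ 1 + c) :
    HasLorentzRep 2 (X ^ 2 - C b * X + C c) := by
  obtain ⟨hb₁, hb₂⟩ := abs_le.mp hb
  refine ⟨C ((1 + c - b) / 4) + C ((c - 1) / 2) * X + C ((1 + c + b) / 4) * X ^ 2,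
    fun k => ?_, by compute_degree, ?_⟩
  · simp only [coeff_add, coeff_C, coeff_C_mul_X, coeff_C_mul_X_pow]
    split_ifs <;> linarith
  · refine Polynomial.funext fun x => ?_
    simp [lorentzForm, sum_range_succ, coeff_C, coeff_X, coeff_X_pow]
    ring

lemma exists_dvd_hasLorentzRep_of_aeval_eq_zero {p : ℝ[X]} {z : ℂ} (hz : aeval z p = 0)
    (hz₁ : 1 < ‖z‖) : ∃ f : ℝ[X], f ∣ p ∧ 0 < f.natDegree ∧ HasLorentzRep f.natDegree f := by
  by_cases him : z.im = 0
  · have hzr : (z.re : ℂ) = z := Complex.ext rfl (by simp [him])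
    have hdvd : X - C z.re ∣ p := by
      have : aeval (z.re : ℂ) p = ((p.eval z.re : ℝ) : ℂ) := aeval_ofReal p z.re
      rw [dvd_iff_isRoot, IsRoot, ← Complex.ofReal_eq_zero, ← this, hzr, hz]
    rw [← hzr, Complex.norm_real, Real.norm_eq_abs] at hz₁
    rcases lt_abs.mp hz₁ with hr | hr
    · have hdeg : (C z.re - X).natDegree = 1 := by compute_degree!
      exact ⟨C z.re - X, by simpa using hdvd.neg_left, hdeg ▸ one_pos,
        hdeg ▸ hasLorentzRep_C_sub_X hr⟩
    · exact ⟨X - C z.re, hdvd, by simp, by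
        rw [natDegree_X_sub_C]; exact hasLorentzRep_X_sub_C (by linarith)⟩
  · have hdeg : (X ^ 2 - C (2 * z.re) * X + C (‖z‖ ^ 2) : ℝ[X]).natDegree = 2 := by
      compute_degree!
    have hrep : HasLorentzRep 2 (X ^ 2 - C (2 * z.re) * X + C (‖z‖ ^ 2)) := by
      refine hasLorentzRep_quadratic (one_le_pow₀ hz₁.le : (1 : ℝ) ≤ ‖z‖ ^ 2) ?_
      rw [abs_mul, abs_two]
      nlinarith [Complex.abs_re_le_norm z, sq_nonneg (‖z‖ - 1)]
    exact ⟨_, quadratic_dvd_of_aeval_eq_zero_im_ne_zero p hz him, by omega, by rwa [hdeg]⟩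

theorem hasLorentzRep_of_aeval_ne_zero (p : ℝ[X]) (hp₀ : 0 ≤ p.eval 0)
    (hp : ∀ z : ℂ, ‖z‖ ≤ 1 → aeval z p ≠ 0) : HasLorentzRep p.natDegree p := by
  induction h : p.natDegree using Nat.strong_induction_on generalizing p with
  | _ n ih =>
  have hp₀pos : 0 < p.eval 0 := by
    refine hp₀.lt_of_ne fun h₀ => hp 0 (by simp) ?_
    have : aeval ((0 : ℝ) : ℂ) p = ((p.eval 0 : ℝ) : ℂ) := aeval_ofReal p 0
    rwa [← h₀, Complex.ofReal_zero] at this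
  rcases Nat.eq_zero_or_pos n with rfl | hn
  · rw [eq_C_of_natDegree_eq_zero h, coeff_zero_eq_eval_zero]
    exact hasLorentzRep_C hp₀
  obtain ⟨z, hz⟩ :=
    IsAlgClosed.exists_aeval_eq_zero ℂ p (natDegree_pos_iff_degree_pos.mp (h ▸ hn)).ne'
  obtain ⟨f, ⟨q, rfl⟩, hf, hfrep⟩ :=
    exists_dvd_hasLorentzRep_of_aeval_eq_zero hz (lt_of_not_ge fun h₁ => hp z h₁ hz)
  have hf₀ : f ≠ 0 := by rintro rfl; simp at hp₀pos
  have hq₀ : q ≠ 0 := by rintro rfl; simp at hp₀pos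
  rw [eval_mul] at hp₀pos
  have hq : HasLorentzRep q.natDegree q :=
    ih _ (by rw [← h, natDegree_mul hf₀ hq₀]; omega) q
      (pos_of_mul_pos_right hp₀pos hfrep.eval_zero_nonneg).le
      (fun w hw hqw => hp w hw (by rw [map_mul, hqw, mul_zero])) rfl
  rw [← h, natDegree_mul hf₀ hq₀]
  exact hfrep.mul hq

/-- Lorentz's theorem: if a real polynomial `p` is nonnegative on `[-1,1]` and has no
complex zeros in the closed unit disk, then `p(x) = Σ_{k=0}^n a_k (1-x)^k (1+x)^{n-k}`
with all `a_k ≥ 0`, where `n = deg p`; i.e. the Lorentz degree of `p` equals `deg p`. -/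
theorem lorentz_degree_eq_degree (p : Polynomial ℝ)
    (hpos : ∀ x ∈ Set.Icc (-1 : ℝ) 1, 0 ≤ p.eval x)
    (hz : ∀ z : ℂ, ‖z‖ ≤ 1 → (p.map (algebraMap ℝ ℂ)).eval z ≠ 0) :
    ∃ a : Fin (p.natDegree + 1) → ℝ, (∀ k, 0 ≤ a k) ∧
      p = ∑ k : Fin (p.natDegree + 1),
        C (a k) * (1 - X) ^ (k : ℕ) * (1 + X) ^ (p.natDegree - (k : ℕ)) := by
  obtain ⟨A, hA, -, hpA⟩ := hasLorentzRep_of_aeval_ne_zero p (hpos 0 (by norm_num))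
    fun z hz₁ => by simpa using hz z hz₁
  exact ⟨fun k => A.coeff k, fun k => hA k, hpA.trans (Fin.sum_univ_eq_sum_range
    (fun k => C (A.coeff k) * (1 - X) ^ k * (1 + X) ^ (p.natDegree - k)) _).symm⟩
end

section
/- Let Ω ⊆ ℝ be compact, E ⊆ C(Ω) a subspace, and suppose {b_r} is a positive basis of E consisting of nonnegative functions. Then for each index k and each ν ∈ ℕ there exists a point ω_{kν} ∈ Ω with b_k(ω_{kν}) > 0 and 0 ≤ Σ_{i=1, i≠k}^{ν} b_i(ω_{kν})/b_k(ω_{kν}) < 1/ν; in particular b_i(ω_{kν})/b_k(ω_{kν}) → 0 for each i ≠ k. -/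
open Filter Topology

/-!
If no point had `b k x > 0` and `∑ i ∈ s, b i x < ε * b k x`, then `∑ i ∈ s, b i - ε • b k` would
be a nonnegative element of `E`. By linear independence its only expansion in the basis has the
negative coefficient `-ε` at `k`, so it is not a nonnegative combination of the `b i`. Taking
`s = {0, …, ν - 1} \ {k}` and `ε = 1 / ν` gives the points `ω ν`.
-/

theorem LinearIndependent.apply_eq_neg_of_sum_smul_eq_sum_sub_smul {R M ι : Type*} [Ring R]
    [AddCommGroup M] [Module R M] {b : ι → M} (hli : LinearIndependent R b) {s : Finset ι}
    {k : ι} (hk : k ∉ s) (ε : R) {a : ι →₀ R}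
    (ha : (a.sum fun i c => c • b i) = ∑ i ∈ s, b i - ε • b k) : a k = -ε := by
  classical
  set c : ι →₀ R := ∑ i ∈ s, Finsupp.single i 1 - Finsupp.single k ε
  have hc : Finsupp.linearCombination R b c = ∑ i ∈ s, b i - ε • b k := by
    simp [c, map_sum, Finsupp.linearCombination_single]
  have hac : a = c := hli (by rw [hc, Finsupp.linearCombination_apply, ha])
  simp [hac, c, Finsupp.single_apply, hk]

theorem ContinuousMap.exists_pos_sum_div_lt_of_positive_basis {X ι : Type*} [TopologicalSpace X]
    {E : Submodule ℝ C(X, ℝ)} {b : ι → C(X, ℝ)} (hbE : ∀ r, b r ∈ E)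
    (hbpos : ∀ r x, 0 ≤ b r x) (hli : LinearIndependent ℝ b)
    (hposbasis : ∀ f ∈ E, (∀ x, 0 ≤ f x) →
      ∃ a : ι →₀ ℝ, (∀ i, 0 ≤ a i) ∧ f = a.sum fun i c => c • b i)
    {s : Finset ι} {k : ι} (hk : k ∉ s) {ε : ℝ} (hε : 0 < ε) :
    ∃ x, 0 < b k x ∧ ∑ i ∈ s, b i x / b k x < ε := by
  by_contra! hge
  set g : C(X, ℝ) := ∑ i ∈ s, b i - ε • b k
  have hgE : g ∈ E := E.sub_mem (E.sum_mem fun i _ => hbE i) (E.smul_mem ε (hbE k))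
  have hg : ∀ x, 0 ≤ g x := by
    intro x
    have hsum : 0 ≤ ∑ i ∈ s, b i x := Finset.sum_nonneg fun i _ => hbpos i x
    suffices ε * b k x ≤ ∑ i ∈ s, b i x by simpa [g, sub_nonneg] using this
    rcases (hbpos k x).eq_or_lt with hzero | hpos
    · simpa [← hzero] using hsum
    · have := hge x hpos
      rwa [← Finset.sum_div, le_div_iff₀ hpos] at this
  obtain ⟨a, ha, hag⟩ := hposbasis g hgE hg
  have hak := hli.apply_eq_neg_of_sum_smul_eq_sum_sub_smul hk ε hag.symm
  linarith [ha k]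

theorem tendsto_zero_of_sum_erase_range_lt_one_div {f : ℕ → ℕ → ℝ} {k : ℕ}
    (hf : ∀ i ν, 0 ≤ f i ν)
    (hlt : ∀ ν : ℕ, 0 < ν → ∑ i ∈ (Finset.range ν).erase k, f i ν < 1 / (ν : ℝ))
    {i : ℕ} (hi : i ≠ k) : Tendsto (f i) atTop (𝓝 0) := by
  refine squeeze_zero' (.of_forall (hf i)) ?_ tendsto_one_div_atTop_nhds_zero_nat
  filter_upwards [eventually_gt_atTop i] with ν hν
  have hmem : i ∈ (Finset.range ν).erase k := Finset.mem_erase.mpr ⟨hi, Finset.mem_range.mpr hν⟩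
  calc f i ν ≤ ∑ j ∈ (Finset.range ν).erase k, f j ν :=
        Finset.single_le_sum (fun j _ => hf j ν) hmem
    _ ≤ 1 / ν := (hlt ν (i.zero_le.trans_lt hν)).le

theorem positive_basis_node_sequences_exist_general (Ω : Set ℝ)
    (E : Submodule ℝ C(Ω, ℝ)) (b : ℕ → C(Ω, ℝ))
    (hbE : ∀ r, b r ∈ E) (hbpos : ∀ r (x : Ω), 0 ≤ b r x)
    (hli : LinearIndependent ℝ b)
    (hposbasis : ∀ f : C(Ω, ℝ), f ∈ E → (∀ x : Ω, 0 ≤ f x) →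
      ∃ a : ℕ →₀ ℝ, (∀ i, 0 ≤ a i) ∧ f = a.sum fun i c => c • b i) :
    ∀ k : ℕ, ∃ ω : ℕ → Ω,
      (∀ ν : ℕ, 0 < ν → 0 < b k (ω ν) ∧
        0 ≤ ∑ i ∈ (Finset.range ν).erase k, b i (ω ν) / b k (ω ν) ∧
        ∑ i ∈ (Finset.range ν).erase k, b i (ω ν) / b k (ω ν) < 1 / (ν : ℝ)) ∧
      ∀ i, i ≠ k → Tendsto (fun ν => b i (ω ν) / b k (ω ν)) atTop (𝓝 0) := by
  intro k
  have key : ∀ ν : ℕ, 0 < ν → ∃ x : Ω, 0 < b k x ∧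
      ∑ i ∈ (Finset.range ν).erase k, b i x / b k x < 1 / (ν : ℝ) := fun ν hν =>
    ContinuousMap.exists_pos_sum_div_lt_of_positive_basis hbE hbpos hli hposbasis
      (Finset.notMem_erase k _) (by positivity)
  have : Nonempty Ω := let ⟨x, _⟩ := key 1 one_pos; ⟨x⟩
  choose! ω hpos hlt using key
  have hratio : ∀ i ν, 0 ≤ b i (ω ν) / b k (ω ν) := fun i ν =>
    div_nonneg (hbpos i _) (hbpos k _)
  exact ⟨ω, fun ν hν => ⟨hpos ν hν, Finset.sum_nonneg fun i _ => hratio i ν, hlt ν hν⟩,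
    fun i hi => tendsto_zero_of_sum_erase_range_lt_one_div hratio hlt hi⟩

/-- Necessary condition: if `{b_r}` is a positive basis of a subspace `E ⊆ C(Ω)`
consisting of nonnegative functions, then for each `k` there are points `ω_{kν} ∈ Ω`
with `b_k(ω_{kν}) > 0` and `0 ≤ Σ_{i < ν, i ≠ k} b_i(ω_{kν})/b_k(ω_{kν}) < 1/ν`;
in particular `b_i(ω_{kν})/b_k(ω_{kν}) → 0` for each `i ≠ k`. -/
theorem positive_basis_node_sequences_exist (Ω : Set ℝ) (hΩ : IsCompact Ω)
    (E : Submodule ℝ C(Ω, ℝ)) (b : ℕ → C(Ω, ℝ))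
    (hbE : ∀ r, b r ∈ E) (hbpos : ∀ r (x : Ω), 0 ≤ b r x)
    (hli : LinearIndependent ℝ b) (hspan : Submodule.span ℝ (Set.range b) = E)
    (hposbasis : ∀ f : C(Ω, ℝ), f ∈ E → (∀ x : Ω, 0 ≤ f x) →
      ∃ a : ℕ →₀ ℝ, (∀ i, 0 ≤ a i) ∧ f = a.sum fun i c => c • b i) :
    ∀ k : ℕ, ∃ ω : ℕ → Ω,
      (∀ ν : ℕ, 0 < ν → 0 < b k (ω ν) ∧
        0 ≤ ∑ i ∈ (Finset.range ν).erase k, b i (ω ν) / b k (ω ν) ∧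
        ∑ i ∈ (Finset.range ν).erase k, b i (ω ν) / b k (ω ν) < 1 / (ν : ℝ)) ∧
      ∀ i, i ≠ k → Tendsto (fun ν => b i (ω ν) / b k (ω ν)) atTop (𝓝 0) :=
  positive_basis_node_sequences_exist_general Ω E b hbE hbpos hli hposbasis
end

section
/- Let a = t_1 < t_2 < ... < t_n = b with n ≥ 2, and define b_1(t) = (t_n - t)·Π_{i=2}^{n-1}(t - t_i)^2, b_k(t) = (t - t_1)(t_n - t)·Π_{i=2, i≠k}^{n-1}(t - t_i)^2 for 2 ≤ k ≤ n-1, and b_n(t) = (t - t_1)·Π_{i=2}^{n-1}(t - t_i)^2. Then each b_k is nonnegative on [a,b], and a linear combination p = Σ λ_i b_i is nonnegative on [a,b] if and only if all λ_i ≥ 0; in particular {b_1,...,b_n} is a positive basis of its span. -/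
/-- For nodes `a = t_0 < t_1 < … < t_{m+1} = b`, the polynomials
`b_0(t) = (b - t)·Π_{0<i<last}(t - t_i)^2`,
`b_k(t) = (t - a)(b - t)·Π_{0<i<last, i≠k}(t - t_i)^2` (for interior `k`), and
`b_last(t) = (t - a)·Π_{0<i<last}(t - t_i)^2`
are nonnegative on `[a,b]`, a combination `Σ λ_i b_i` is nonnegative on `[a,b]` iff all
`λ_i ≥ 0`, and they are linearly independent; hence they form a positive basis of their
span. -/
theorem explicit_positive_basis_on_interval (m : ℕ)
    (t : Fin (m + 2) → ℝ) (ht : StrictMono t)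
    (B : Fin (m + 2) → ℝ → ℝ)
    (hB : ∀ k x, B k x =
      (x - t 0) ^ (if k = 0 then 0 else 1) *
        (t (Fin.last (m + 1)) - x) ^ (if k = Fin.last (m + 1) then 0 else 1) *
        ∏ i ∈ Finset.univ.filter
            (fun i : Fin (m + 2) => i ≠ 0 ∧ i ≠ Fin.last (m + 1) ∧ i ≠ k),
          (x - t i) ^ 2) :
    (∀ k, ∀ x ∈ Set.Icc (t 0) (t (Fin.last (m + 1))), 0 ≤ B k x) ∧
    (∀ lam : Fin (m + 2) → ℝ,
      (∀ x ∈ Set.Icc (t 0) (t (Fin.last (m + 1))), 0 ≤ ∑ i, lam i * B i x) ↔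
        ∀ i, 0 ≤ lam i) ∧
    LinearIndependent ℝ B := by
  have hmem : ∀ k : Fin (m+2), t k ∈ Set.Icc (t 0) (t (Fin.last (m+1))) := fun k =>
    ⟨ht.monotone (Fin.zero_le k), ht.monotone (Fin.le_last k)⟩
  have hnonneg : ∀ k, ∀ x ∈ Set.Icc (t 0) (t (Fin.last (m+1))), 0 ≤ B k x := by
    intro k x hx
    rw [hB]
    refine mul_nonneg (mul_nonneg (pow_nonneg (by linarith [hx.1]) _)
      (pow_nonneg (by linarith [hx.2]) _)) ?_
    exact Finset.prod_nonneg fun i _ => sq_nonneg _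
  have heval0 : ∀ i k : Fin (m+2), i ≠ k → B i (t k) = 0 := by
    intro i k hik
    rw [hB]
    by_cases hk0 : k = 0
    · subst hk0
      rw [if_neg hik, pow_one, sub_self, zero_mul, zero_mul]
    by_cases hkl : k = Fin.last (m+1)
    · subst hkl
      rw [if_neg hik, pow_one, sub_self, mul_zero, zero_mul]
    · rw [Finset.prod_eq_zero (i := k)
        (by simp [hk0, hkl, Ne.symm hik]) (by simp), mul_zero]
  have hevalk : ∀ k, 0 < B k (t k) := by
    intro k
    rw [hB]
    refine mul_pos (mul_pos ?_ ?_) ?_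
    · rcases eq_or_ne k 0 with h | h
      · simp [h]
      · rw [if_neg h, pow_one]
        have := ht (Fin.pos_of_ne_zero h)
        linarith
    · rcases eq_or_ne k (Fin.last (m+1)) with h | h
      · simp [h]
      · rw [if_neg h, pow_one]
        have : t k < t (Fin.last (m+1)) := ht (lt_of_le_of_ne (Fin.le_last k) h)
        linarith
    · refine Finset.prod_pos fun i hi => ?_
      simp only [Finset.mem_filter] at hi
      have hne : t k - t i ≠ 0 :=
        sub_ne_zero.mpr fun h => hi.2.2.2 (ht.injective h.symm)
      exact pow_two_pos_of_ne_zero hne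
  have hsum : ∀ (lam : Fin (m+2) → ℝ) (k : Fin (m+2)),
      ∑ i, lam i * B i (t k) = lam k * B k (t k) := by
    intro lam k
    refine Finset.sum_eq_single k ?_ ?_
    · intro i _ hik; rw [heval0 i k hik, mul_zero]
    · intro h; exact absurd (Finset.mem_univ k) h
  refine ⟨hnonneg, fun lam => ⟨fun h k => ?_, fun h x hx =>
    Finset.sum_nonneg fun i _ => mul_nonneg (h i) (hnonneg i x hx)⟩, ?_⟩
  · have h2 := h (t k) (hmem k)
    rw [hsum] at h2
    exact (mul_nonneg_iff_of_pos_right (hevalk k)).mp h2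
  · rw [Fintype.linearIndependent_iff]
    intro g hg k
    have h2 := congrFun hg (t k)
    simp only [Finset.sum_apply, Pi.smul_apply, smul_eq_mul, Pi.zero_apply] at h2
    rw [hsum g k] at h2
    exact (mul_eq_zero.mp h2).resolve_right (ne_of_gt (hevalk k))
end

section
/- If X is a subspace of the polynomials of degree at most m on a nondegenerate interval [a,b] and X admits a positive basis, then dim X ≤ ⌊(m+3)/2⌋; moreover this bound is attained: there exists such an X with a positive basis and dim X = ⌊(m+3)/2⌋. -/
/-!
Every member of a positive basis `f₁, …, fₙ` is nonnegative on `[a, b]`. For each `i` there is a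
node `tᵢ ∈ [a, b]` at which `fᵢ` vanishes to strictly lower order than every other `fⱼ`:
otherwise `q = ∑_{j ≠ i} fⱼ` vanishes at each point of `[a, b]` at most as often as `fᵢ`, hence
`ε fᵢ ≤ q` on `[a, b]` for some `ε > 0`, and `q - ε fᵢ` would be a nonnegative element with a
negative coordinate. The nodes are distinct and `fᵢ` vanishes at all the other nodes, doubly at
those inside `(a, b)`; choosing `i` so that no other node is `a` gives `2 (n - 1) - 1 ≤ m`.

Conversely, for nodes `a = t₀ < ⋯ < tₙ₋₁ = b`, the products over `j ≠ i` of `x - a`, `b - x` or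
`(x - tⱼ)²`, according as `tⱼ` is `a`, `b` or interior, are dual to evaluation at the nodes, hence
a positive basis, and have degree at most `2n - 3`.
-/

open Polynomial Set Filter Topology Finset Function

/-- `HasPosBasisDim a b m n` : there is an `n`-dimensional subspace of the polynomials of
degree at most `m` on `[a,b]` with a positive basis `bb_1,…,bb_n`: a linearly independent
family such that an element of its span is nonnegative on `[a,b]` iff it is a nonnegative
linear combination of the `bb_i`. -/
def HasPosBasisDim (a b : ℝ) (m n : ℕ) : Prop :=
  ∃ bb : Fin n → Polynomial ℝ,
    (∀ i, (bb i).natDegree ≤ m) ∧ LinearIndependent ℝ bb ∧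
    ∀ p ∈ Submodule.span ℝ (Set.range bb),
      ((∀ x ∈ Set.Icc a b, 0 ≤ Polynomial.eval x p) ↔
        ∃ c : Fin n → ℝ, (∀ i, 0 ≤ c i) ∧ p = ∑ i, c i • bb i)

namespace Polynomial

theorem rootMultiplicity_le_of_abs_eval_le {S : Set ℝ} {f g : ℝ[X]} {t : ℝ} (hf : f ≠ 0)
    (ht : AccPt t (𝓟 S)) (hfg : ∀ x ∈ S, |f.eval x| ≤ |g.eval x|) :
    g.rootMultiplicity t ≤ f.rootMultiplicity t := by
  by_contra! hlt
  set k := f.rootMultiplicity t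
  obtain ⟨g₁, hg₁⟩ : (X - C t) ^ (k + 1) ∣ g :=
    (pow_dvd_pow _ hlt).trans (pow_rootMultiplicity_dvd g t)
  set f₁ := f /ₘ (X - C t) ^ k
  have hf₁ : f₁.eval t ≠ 0 := eval_divByMonic_pow_rootMultiplicity_ne_zero t hf
  have hf_eq : (X - C t) ^ k * f₁ = f := pow_mul_divByMonic_rootMultiplicity_eq f t
  have hle : ∀ᶠ x in 𝓝[≠] t ⊓ 𝓟 S, |f₁.eval x| ≤ |x - t| * |g₁.eval x| := by
    filter_upwards [mem_inf_of_left self_mem_nhdsWithin, mem_inf_of_right (mem_principal_self S)]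
      with x hxt hxS
    have h := hfg x hxS
    rw [← hf_eq, hg₁] at h
    simp only [eval_mul, eval_pow, eval_sub, eval_X, eval_C, abs_mul, abs_pow, pow_succ,
      mul_assoc] at h
    exact le_of_mul_le_mul_left h (pow_pos (abs_pos.2 (sub_ne_zero.2 hxt)) k)
  have : (𝓝[≠] t ⊓ 𝓟 S).NeBot := ht
  have hnhds : 𝓝[≠] t ⊓ 𝓟 S ≤ 𝓝 t := inf_le_left.trans nhdsWithin_le_nhds
  have hlim₁ := (f₁.continuous.abs.tendsto t).mono_left hnhds
  have hlim₂ : Tendsto (fun x => |x - t| * |g₁.eval x|) (𝓝[≠] t ⊓ 𝓟 S) (𝓝 0) := by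
    have hcont : Continuous fun x => |x - t| * |g₁.eval x| := by fun_prop
    exact (hcont.tendsto' t 0 (by simp)).mono_left hnhds
  exact hf₁ (abs_nonpos_iff.1 (le_of_tendsto_of_tendsto hlim₁ hlim₂ hle))

theorem exists_pos_smul_le_of_rootMultiplicity_le {K : Set ℝ} (hK : IsCompact K) {f q : ℝ[X]}
    (hq : q ≠ 0) (hq₀ : ∀ x ∈ K, 0 ≤ q.eval x)
    (hmult : ∀ t ∈ K, q.rootMultiplicity t ≤ f.rootMultiplicity t) :
    ∃ ε > 0, ∀ x ∈ K, ε * f.eval x ≤ q.eval x := by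
  classical
  set s := q.roots.filter (· ∈ K)
  set u := (s.map fun r => X - C r).prod
  have hcount : ∀ r, s.count r = if r ∈ K then q.rootMultiplicity r else 0 := fun r => by
    simp only [s, Multiset.count_filter, count_roots]
  obtain ⟨v, hv⟩ : u ∣ q :=
    (Multiset.prod_X_sub_C_dvd_iff_le_roots hq s).2 (Multiset.filter_le _ _)
  obtain ⟨w, hw⟩ : u ∣ f := by
    rcases eq_or_ne f 0 with rfl | hf
    · exact dvd_zero u
    refine (Multiset.prod_X_sub_C_dvd_iff_le_roots hf s).2 (Multiset.le_iff_count.2 fun r => ?_)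
    rw [hcount, count_roots]
    split_ifs with hr
    exacts [hmult r hr, Nat.zero_le _]
  have hv₀ : ∀ x ∈ K, v.eval x ≠ 0 := by
    intro x hx hvx
    have hu : u.rootMultiplicity x = q.rootMultiplicity x := by
      rw [← count_roots, roots_multiset_prod_X_sub_C, hcount, if_pos hx]
    have hmul := rootMultiplicity_mul (x := x) (hv ▸ hq)
    rw [← hv, hu] at hmul
    have := (rootMultiplicity_pos (right_ne_zero_of_mul (hv ▸ hq))).2 hvx
    omega
  -- `q - ε f = q (1 - ε w / v)` on `K`, and `w / v` is bounded there
  have hcont : ContinuousOn (fun x => w.eval x / v.eval x) K :=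
    w.continuous.continuousOn.div v.continuous.continuousOn hv₀
  obtain ⟨C, hC⟩ := hK.exists_bound_of_continuousOn hcont
  refine ⟨1 / (max C 0 + 1), by positivity, fun x hx => ?_⟩
  have hratio : 1 / (max C 0 + 1) * (w.eval x / v.eval x) ≤ 1 := by
    have := (Real.le_norm_self _).trans ((hC x hx).trans (le_max_left C 0))
    rw [div_mul_eq_mul_div, one_mul, div_le_one (by positivity)]
    linarith
  have hfx : f.eval x = q.eval x * (w.eval x / v.eval x) := by
    rw [hw, hv, eval_mul, eval_mul]
    field_simp [hv₀ x hx]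
  calc 1 / (max C 0 + 1) * f.eval x
      = q.eval x * (1 / (max C 0 + 1) * (w.eval x / v.eval x)) := by rw [hfx]; ring
    _ ≤ q.eval x := mul_le_of_le_one_right (hq₀ x hx) hratio

theorem sum_rootMultiplicity_le_natDegree {R : Type*} [CommRing R] [IsDomain R] [DecidableEq R]
    (p : R[X]) (Z : Finset R) : ∑ z ∈ Z, p.rootMultiplicity z ≤ p.natDegree :=
  calc ∑ z ∈ Z, p.rootMultiplicity z = ∑ z ∈ Z, p.roots.count z := by simp only [count_roots]
    _ ≤ ∑ z ∈ Z ∪ p.roots.toFinset, p.roots.count z := sum_le_sum_of_subset subset_union_left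
    _ = Multiset.card p.roots := Multiset.sum_count_eq_card fun z hz => by simp [hz]
    _ ≤ p.natDegree := card_roots' p

theorem one_lt_rootMultiplicity_of_isLocalMin {p : ℝ[X]} (hp : p ≠ 0) {x : ℝ}
    (hmin : IsLocalMin (fun y => p.eval y) x) (hx : p.IsRoot x) : 1 < p.rootMultiplicity x :=
  (one_lt_rootMultiplicity_iff_isRoot hp).2 ⟨hx, by simpa using hmin.deriv_eq_zero⟩

theorem two_mul_card_le_natDegree_add_one {a b : ℝ} {p : ℝ[X]} (hp : p ≠ 0)
    (hnn : ∀ x ∈ Icc a b, 0 ≤ p.eval x) {Z : Finset ℝ} (hZ : ∀ z ∈ Z, z ∈ Ioc a b)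
    (hroot : ∀ z ∈ Z, p.IsRoot z) : 2 * Z.card ≤ p.natDegree + 1 := by
  have hz : ∀ z ∈ Z, 2 ≤ p.rootMultiplicity z + if z = b then 1 else 0 := by
    intro z hz
    split_ifs with hzb
    · have := (rootMultiplicity_pos hp).2 (hroot z hz)
      omega
    · have hzI : z ∈ Ioo a b := ⟨(hZ z hz).1, (hZ z hz).2.lt_of_ne hzb⟩
      have hmin : IsLocalMin (fun y => p.eval y) z :=
        Filter.mem_of_superset (Ioo_mem_nhds hzI.1 hzI.2) fun y hy => by
          simpa [(hroot z hz).eq_zero] using hnn y (Ioo_subset_Icc_self hy)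
      exact one_lt_rootMultiplicity_of_isLocalMin hp hmin (hroot z hz)
  calc 2 * Z.card = ∑ z ∈ Z, 2 := by rw [sum_const, smul_eq_mul, mul_comm]
    _ ≤ ∑ z ∈ Z, (p.rootMultiplicity z + if z = b then 1 else 0) := sum_le_sum hz
    _ = ∑ z ∈ Z, p.rootMultiplicity z + if b ∈ Z then 1 else 0 := by
      rw [sum_add_distrib, sum_ite_eq']
    _ ≤ p.natDegree + 1 :=
      add_le_add (sum_rootMultiplicity_le_natDegree p Z) (by split_ifs <;> simp)

end Polynomial

def IsPositiveBasisOn {ι : Type*} [Fintype ι] (s : Set ℝ) (f : ι → ℝ[X]) : Prop :=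
  ∀ p ∈ Submodule.span ℝ (Set.range f),
    ((∀ x ∈ s, 0 ≤ p.eval x) ↔ ∃ c : ι → ℝ, (∀ i, 0 ≤ c i) ∧ p = ∑ i, c i • f i)

namespace IsPositiveBasisOn

variable {ι : Type*} [Fintype ι] {s : Set ℝ} {f : ι → ℝ[X]}

theorem eval_nonneg (hf : IsPositiveBasisOn s f) (i : ι) {x : ℝ} (hx : x ∈ s) :
    0 ≤ (f i).eval x := by
  classical
  refine ((hf (f i) (Submodule.subset_span (mem_range_self i))).2
    ⟨Pi.single i 1, fun j => ?_, ?_⟩) x hx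
  · by_cases h : j = i <;> simp [h]
  · simp [Pi.single_apply]

theorem coeff_nonneg (hf : IsPositiveBasisOn s f) (hli : LinearIndependent ℝ f) {c : ι → ℝ}
    (hc : ∀ x ∈ s, 0 ≤ (∑ i, c i • f i).eval x) (i : ι) : 0 ≤ c i := by
  have hmem : ∑ i, c i • f i ∈ Submodule.span ℝ (range f) :=
    Submodule.sum_smul_mem _ c fun j _ => Submodule.subset_span (mem_range_self j)
  obtain ⟨d, hd, hcd⟩ := (hf _ hmem).1 hc
  rw [Fintype.linearIndependent_iffₛ.1 hli c d hcd i]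
  exact hd i

theorem not_forall_smul_le_sum_erase [DecidableEq ι] (hf : IsPositiveBasisOn s f)
    (hli : LinearIndependent ℝ f) (i : ι) {ε : ℝ} (hε : 0 < ε) :
    ¬ ∀ x ∈ s, ε * (f i).eval x ≤ (∑ j ∈ univ.erase i, f j).eval x := by
  intro hle
  have hc : ∀ x ∈ s, 0 ≤ (∑ j, Function.update (1 : ι → ℝ) i (-ε) j • f j).eval x := by
    intro x hx
    rw [← add_sum_erase _ _ (mem_univ i), Function.update_self, sum_congr rfl fun j hj => by
      rw [Function.update_of_ne (ne_of_mem_erase hj), Pi.one_apply, one_smul]]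
    simpa [eval_finsetSum] using hle x hx
  have := hf.coeff_nonneg hli hc i
  rw [Function.update_self] at this
  linarith

theorem exists_rootMultiplicity_lt [DecidableEq ι] {a b : ℝ} (hab : a < b)
    (hf : IsPositiveBasisOn (Icc a b) f) (hli : LinearIndependent ℝ f) (i : ι) :
    ∃ t ∈ Icc a b, ∀ j ≠ i, (f i).rootMultiplicity t < (f j).rootMultiplicity t := by
  by_contra! hcon
  set q := ∑ j ∈ univ.erase i, f j
  have hle : ∀ j ≠ i, ∀ x ∈ Icc a b, (f j).eval x ≤ q.eval x := fun j hj x hx => by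
    rw [eval_finsetSum]
    exact single_le_sum (fun k _ => hf.eval_nonneg k hx) (mem_erase.2 ⟨hj, mem_univ j⟩)
  obtain ⟨j, hji, -⟩ := hcon a (left_mem_Icc.2 hab.le)
  have hq : q ≠ 0 := fun h => one_ne_zero <| linearIndependent_iff'.1 hli _ (fun _ => 1)
    (by simpa only [one_smul] using h) j (mem_erase.2 ⟨hji, mem_univ j⟩)
  have hperfect : Preperfect (Icc a b) := isPreconnected_Icc.preperfect_of_nontrivial
    ⟨a, left_mem_Icc.2 hab.le, b, right_mem_Icc.2 hab.le, hab.ne⟩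
  have hmult : ∀ t ∈ Icc a b, q.rootMultiplicity t ≤ (f i).rootMultiplicity t := by
    intro t ht
    obtain ⟨k, hki, hk⟩ := hcon t ht
    refine le_trans (rootMultiplicity_le_of_abs_eval_le (hli.ne_zero k) (hperfect t ht)
      fun x hx => ?_) hk
    exact abs_le_abs_of_nonneg (hf.eval_nonneg k hx) (hle k hki x hx)
  obtain ⟨ε, hε, hεle⟩ := exists_pos_smul_le_of_rootMultiplicity_le isCompact_Icc hq
    (fun x hx => (hf.eval_nonneg j hx).trans (hle j hji x hx)) hmult
  exact hf.not_forall_smul_le_sum_erase hli i hε hεle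

theorem two_mul_card_le {a b : ℝ} (hab : a < b) {m : ℕ} (hf : IsPositiveBasisOn (Icc a b) f)
    (hli : LinearIndependent ℝ f) (hdeg : ∀ i, (f i).natDegree ≤ m) :
    2 * Fintype.card ι ≤ m + 3 := by
  classical
  rcases isEmpty_or_nonempty ι with _ | ⟨⟨i₀⟩⟩
  · simp
  choose t ht hlt using hf.exists_rootMultiplicity_lt hab hli
  have ht_inj : Injective t := fun i j hij => by
    by_contra hne
    have := hlt j i hne
    rw [← hij] at this
    exact (hlt i j (Ne.symm hne)).asymm this
  -- so that, of the roots `t j` (`j ≠ i`) of `f i`, only `b` can be simple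
  obtain ⟨i, hi⟩ : ∃ i, ∀ j ≠ i, t j ≠ a := by
    by_cases h : ∃ k, t k = a
    · obtain ⟨k, hk⟩ := h
      exact ⟨k, fun j hj hja => hj (ht_inj (hja.trans hk.symm))⟩
    · simp only [not_exists] at h
      exact ⟨i₀, fun j _ => h j⟩
  have hcard := two_mul_card_le_natDegree_add_one (Z := (univ.erase i).image t)
    (hli.ne_zero i) (fun x hx => hf.eval_nonneg i hx)
    (by
      simp only [Finset.mem_image, mem_erase, Finset.mem_univ, and_true]
      rintro _ ⟨j, hj, rfl⟩
      exact ⟨(ht j).1.lt_of_ne (hi j hj).symm, (ht j).2⟩)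
    (by
      simp only [Finset.mem_image, mem_erase, Finset.mem_univ, and_true]
      rintro _ ⟨j, hj, rfl⟩
      exact (rootMultiplicity_pos (hli.ne_zero i)).1 ((Nat.zero_le _).trans_lt (hlt j i hj.symm)))
  rw [Finset.card_image_of_injective _ ht_inj, card_erase_of_mem (mem_univ i), card_univ] at hcard
  have := hdeg i
  have := Fintype.card_pos_iff.2 ⟨i₀⟩
  omega

end IsPositiveBasisOn

section DualToEvaluation

variable {ι : Type*} [Fintype ι] {f : ι → ℝ[X]} {t : ι → ℝ}

theorem eval_sum_smul_of_eval_eq_zero (h₀ : ∀ i j, j ≠ i → (f i).eval (t j) = 0) (c : ι → ℝ)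
    (k : ι) : (∑ i, c i • f i).eval (t k) = c k * (f k).eval (t k) := by
  rw [eval_finsetSum]
  simp only [eval_smul, smul_eq_mul]
  exact sum_eq_single k (fun j _ hj => by rw [h₀ j k hj.symm, mul_zero]) (by simp)

theorem linearIndependent_of_eval (h₀ : ∀ i j, j ≠ i → (f i).eval (t j) = 0)
    (hne : ∀ i, (f i).eval (t i) ≠ 0) : LinearIndependent ℝ f :=
  Fintype.linearIndependent_iff.2 fun c hc k => by
    have := eval_sum_smul_of_eval_eq_zero h₀ c k
    rw [hc, eval_zero] at this
    exact (mul_eq_zero.1 this.symm).resolve_right (hne k)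

theorem isPositiveBasisOn_of_eval {s : Set ℝ} (hts : ∀ i, t i ∈ s)
    (hnn : ∀ i, ∀ x ∈ s, 0 ≤ (f i).eval x) (h₀ : ∀ i j, j ≠ i → (f i).eval (t j) = 0)
    (hpos : ∀ i, 0 < (f i).eval (t i)) : IsPositiveBasisOn s f := by
  intro p hp
  obtain ⟨c, rfl⟩ := (Submodule.mem_span_range_iff_exists_fun ℝ).1 hp
  refine ⟨fun hc => ⟨c, fun k => ?_, rfl⟩, ?_⟩
  · have := hc (t k) (hts k)
    rw [eval_sum_smul_of_eval_eq_zero h₀] at this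
    exact nonneg_of_mul_nonneg_left this (hpos k)
  · rintro ⟨d, hd, hcd⟩ x hx
    rw [hcd, eval_finsetSum]
    exact sum_nonneg fun j _ => by
      rw [eval_smul, smul_eq_mul]
      exact mul_nonneg (hd j) (hnn j x hx)

end DualToEvaluation

-- simple at an endpoint, where the sign is already right on `[a, b]`, double at an interior node
noncomputable def nodeFactor (a b s : ℝ) : ℝ[X] :=
  if s = a then X - C a else if s = b then C b - X else (X - C s) ^ 2

section nodeFactor

variable {a b x : ℝ} (s : ℝ)

theorem eval_nodeFactor_self : (nodeFactor a b s).eval s = 0 := by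
  unfold nodeFactor
  split_ifs with ha hb
  · simp [ha]
  · simp [hb]
  · simp

theorem eval_nodeFactor_nonneg (hx : x ∈ Icc a b) : 0 ≤ (nodeFactor a b s).eval x := by
  unfold nodeFactor
  split_ifs
  · simpa using hx.1
  · simpa using hx.2
  · simpa using sq_nonneg (x - s)

theorem eval_nodeFactor_pos (hx : x ∈ Icc a b) (hxs : x ≠ s) : 0 < (nodeFactor a b s).eval x := by
  unfold nodeFactor
  split_ifs with ha hb
  · subst ha
    simpa using hx.1.lt_of_ne' hxs
  · subst hb
    simpa using hx.2.lt_of_ne hxs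
  · simpa using pow_pos (abs_pos.2 (sub_ne_zero.2 hxs)) 2

theorem natDegree_nodeFactor_le : (nodeFactor a b s).natDegree ≤ 2 := by
  unfold nodeFactor
  split_ifs
  · exact (natDegree_X_sub_C a).trans_le one_le_two
  · exact natDegree_sub_le_of_le (natDegree_C b).le natDegree_X_le |>.trans one_le_two
  · exact natDegree_pow_le_of_le 2 (natDegree_X_sub_C s).le |>.trans (by norm_num)

theorem natDegree_nodeFactor_le_one (hs : s = a ∨ s = b) : (nodeFactor a b s).natDegree ≤ 1 := by
  unfold nodeFactor
  split_ifs with ha hb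
  · exact (natDegree_X_sub_C a).le
  · exact natDegree_sub_le_of_le (natDegree_C b).le natDegree_X_le |>.trans le_rfl
  · exact absurd hs (by tauto)

end nodeFactor

noncomputable def nodeBasis {ι : Type*} [Fintype ι] [DecidableEq ι] (a b : ℝ) (t : ι → ℝ)
    (i : ι) : ℝ[X] :=
  ∏ j ∈ univ.erase i, nodeFactor a b (t j)

section nodeBasis

variable {ι : Type*} [Fintype ι] [DecidableEq ι] {a b : ℝ} {t : ι → ℝ}

theorem eval_nodeBasis_of_ne {i j : ι} (hji : j ≠ i) : (nodeBasis a b t i).eval (t j) = 0 := by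
  rw [nodeBasis, eval_prod]
  exact prod_eq_zero (mem_erase.2 ⟨hji, mem_univ j⟩) (eval_nodeFactor_self _)

theorem eval_nodeBasis_nonneg (i : ι) {x : ℝ} (hx : x ∈ Icc a b) :
    0 ≤ (nodeBasis a b t i).eval x := by
  rw [nodeBasis, eval_prod]
  exact prod_nonneg fun j _ => eval_nodeFactor_nonneg _ hx

theorem eval_nodeBasis_self_pos (ht : Injective t) (hts : ∀ i, t i ∈ Icc a b) (i : ι) :
    0 < (nodeBasis a b t i).eval (t i) := by
  rw [nodeBasis, eval_prod]
  exact prod_pos fun j hj => eval_nodeFactor_pos _ (hts i) (ht.ne (ne_of_mem_erase hj).symm)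

theorem natDegree_nodeBasis_le {n : ℕ} {t : Fin (n + 2) → ℝ} (h₀ : t 0 = a)
    (hlast : t (Fin.last _) = b) (i : Fin (n + 2)) :
    (nodeBasis a b t i).natDegree ≤ 2 * n + 1 := by
  obtain ⟨j₀, hj₀, hend⟩ : ∃ j₀ ∈ univ.erase i, t j₀ = a ∨ t j₀ = b := by
    by_cases hi : i = 0
    · exact ⟨Fin.last _, mem_erase.2 ⟨by simp [hi, Fin.ext_iff], mem_univ _⟩, Or.inr hlast⟩
    · exact ⟨0, mem_erase.2 ⟨Ne.symm hi, mem_univ _⟩, Or.inl h₀⟩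
  have hrest : ∑ j ∈ (univ.erase i).erase j₀, (nodeFactor a b (t j)).natDegree ≤ 2 * n := by
    refine (sum_le_card_nsmul _ _ 2 fun j _ => natDegree_nodeFactor_le _).trans_eq ?_
    rw [card_erase_of_mem hj₀, card_erase_of_mem (mem_univ i), card_univ, Fintype.card_fin,
      smul_eq_mul, mul_comm]
    rfl
  calc (nodeBasis a b t i).natDegree
      ≤ ∑ j ∈ univ.erase i, (nodeFactor a b (t j)).natDegree := natDegree_prod_le _ _
    _ = (nodeFactor a b (t j₀)).natDegree
        + ∑ j ∈ (univ.erase i).erase j₀, (nodeFactor a b (t j)).natDegree :=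
      (add_sum_erase _ _ hj₀).symm
    _ ≤ 1 + 2 * n := add_le_add (natDegree_nodeFactor_le_one _ hend) hrest
    _ = 2 * n + 1 := add_comm _ _

end nodeBasis

theorem hasPosBasisDim_of_nodes {a b : ℝ} {m n : ℕ} {t : Fin n → ℝ} (ht : Injective t)
    (hts : ∀ i, t i ∈ Icc a b) (hdeg : ∀ i, (nodeBasis a b t i).natDegree ≤ m) :
    HasPosBasisDim a b m n :=
  ⟨nodeBasis a b t, hdeg,
    linearIndependent_of_eval (fun _ _ => eval_nodeBasis_of_ne)
      fun i => (eval_nodeBasis_self_pos ht hts i).ne',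
    isPositiveBasisOn_of_eval hts (fun i _ => eval_nodeBasis_nonneg i)
      (fun _ _ => eval_nodeBasis_of_ne) (eval_nodeBasis_self_pos ht hts)⟩

theorem hasPosBasisDim_of_two_mul_le {a b : ℝ} (hab : a < b) {m n : ℕ} (h : 2 * n ≤ m + 3) :
    HasPosBasisDim a b m n := by
  rcases n with _ | _ | n
  · exact hasPosBasisDim_of_nodes (t := Fin.elim0) (fun i => i.elim0) (fun i => i.elim0)
      fun i => i.elim0
  · show HasPosBasisDim a b m 1
    exact hasPosBasisDim_of_nodes (t := fun _ => a) (injective_of_subsingleton _)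
      (fun _ => left_mem_Icc.2 hab.le) fun i => by simp [nodeBasis, Subsingleton.elim i 0]
  · set t : Fin (n + 2) → ℝ := fun j => a + (b - a) * (j / (n + 1))
    have hn : (0 : ℝ) < n + 1 := by positivity
    have ht : Injective t := fun i j hij => by
      simpa [t, sub_ne_zero.2 hab.ne', hn.ne', Fin.val_inj] using hij
    have hts : ∀ j, t j ∈ Icc a b := fun j => by
      have h₀ : (0 : ℝ) ≤ j / (n + 1) := by positivity
      have h₁ : (j : ℝ) / (n + 1) ≤ 1 := by
        rw [div_le_one hn]
        exact_mod_cast j.is_le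
      constructor <;> nlinarith
    have hlast : t (Fin.last _) = b := by simp [t, hn.ne']
    exact hasPosBasisDim_of_nodes ht hts fun i =>
      (natDegree_nodeBasis_le (by simp [t]) hlast i).trans (by omega)

/-- The maximal dimension of a subspace of `P_m([a,b])` (with `a < b`) possessing a
positive basis is exactly `⌊(m+3)/2⌋`. -/
theorem max_dim_positive_basis_interval (a b : ℝ) (hab : a < b) (m : ℕ) :
    (∀ n, HasPosBasisDim a b m n → n ≤ (m + 3) / 2) ∧
      HasPosBasisDim a b m ((m + 3) / 2) := by
  refine ⟨fun n ⟨f, hdeg, hli, hf⟩ => ?_, hasPosBasisDim_of_two_mul_le hab (by omega)⟩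
  have := IsPositiveBasisOn.two_mul_card_le hab hf hli hdeg
  rw [Fintype.card_fin] at this
  omega
end

section
/- Let t_1 < t_2 be real and suppose x_0 < t_1 < x_1 < t_2 < x_2 with the sign constraints p(t_1) = p(t_2) = 0, p(x_0) ≥ 0, p(x_1) ≥ 0 (but no constraint at x_2). Then the minimal degree of a nonzero such polynomial is 3, attained by p(x) = (x - t_1)^2(t_2 - x). -/
open Polynomial

/-- Case `ω = (1,1,0)`: with `x₀ < t₁ < x₁ < t₂ < x₂`, the minimal degree of a nonzero
polynomial with `p(t₁) = p(t₂) = 0`, `p(x₀) ≥ 0`, `p(x₁) ≥ 0` (no constraint at `x₂`)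
is `3`, attained by `p(x) = (x - t₁)²(t₂ - x)`. -/
theorem tau_one_one_zero (t₁ t₂ x₀ x₁ x₂ : ℝ)
    (h₀ : x₀ < t₁) (h₁ : t₁ < x₁) (h₂ : x₁ < t₂) (h₃ : t₂ < x₂) :
    (∀ p : Polynomial ℝ, p ≠ 0 → p.eval t₁ = 0 → p.eval t₂ = 0 →
      0 ≤ p.eval x₀ → 0 ≤ p.eval x₁ → 3 ≤ p.natDegree) ∧
    (((X - C t₁) ^ 2 * (C t₂ - X) : Polynomial ℝ) ≠ 0 ∧
      ((X - C t₁) ^ 2 * (C t₂ - X) : Polynomial ℝ).eval t₁ = 0 ∧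
      ((X - C t₁) ^ 2 * (C t₂ - X) : Polynomial ℝ).eval t₂ = 0 ∧
      0 ≤ ((X - C t₁) ^ 2 * (C t₂ - X) : Polynomial ℝ).eval x₀ ∧
      0 ≤ ((X - C t₁) ^ 2 * (C t₂ - X) : Polynomial ℝ).eval x₁ ∧
      ((X - C t₁) ^ 2 * (C t₂ - X) : Polynomial ℝ).natDegree = 3) := by
  constructor
  · intro p hp ht1 ht2 hx0 hx1
    by_contra hlt
    push_neg at hlt
    obtain ⟨q, hq⟩ := dvd_iff_isRoot.mpr ht1
    have hq0 : q ≠ 0 := by rintro rfl; simp at hq; exact hp hq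
    have hqt2 : q.eval t₂ = 0 := by
      have h := ht2
      rw [hq] at h
      simp only [eval_mul, eval_sub, eval_X, eval_C, mul_eq_zero] at h
      rcases h with h | h
      · nlinarith
      · exact h
    obtain ⟨r, hr⟩ := dvd_iff_isRoot.mpr hqt2
    have hr0 : r ≠ 0 := by rintro rfl; simp at hr; exact hq0 hr
    have hX1 : (X - C t₁ : Polynomial ℝ) ≠ 0 := X_sub_C_ne_zero t₁
    have hX2 : (X - C t₂ : Polynomial ℝ) ≠ 0 := X_sub_C_ne_zero t₂
    have hdeg : p.natDegree = 2 + r.natDegree := by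
      rw [hq, hr, natDegree_mul hX1 (mul_ne_zero hX2 hr0),
        natDegree_mul hX2 hr0, natDegree_X_sub_C, natDegree_X_sub_C]
      ring
    have hrd : r.natDegree = 0 := by omega
    obtain ⟨c, hc⟩ := natDegree_eq_zero.mp hrd
    have hc0 : c ≠ 0 := by rintro rfl; simp at hc; exact hr0 hc.symm
    rw [hq, hr, ← hc] at hx0 hx1
    simp only [eval_mul, eval_sub, eval_X, eval_C] at hx0 hx1
    have hpos0 : 0 < (x₀ - t₁) * (x₀ - t₂) :=
      mul_pos_of_neg_of_neg (by linarith) (by linarith)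
    have hpos1 : 0 < (x₁ - t₁) * (t₂ - x₁) :=
      mul_pos (by linarith) (by linarith)
    have hcle : c ≤ 0 := by nlinarith
    have hcge : 0 ≤ c := by nlinarith
    exact hc0 (le_antisymm hcle hcge)
  · have hX1 : (X - C t₁ : Polynomial ℝ) ≠ 0 := X_sub_C_ne_zero t₁
    have hX2 : (C t₂ - X : Polynomial ℝ) ≠ 0 := by
      intro h
      have := congrArg (eval (t₂ + 1)) h
      simp at this
    refine ⟨mul_ne_zero (pow_ne_zero 2 hX1) hX2, by simp, by simp, ?_, ?_, ?_⟩
    · simp only [eval_mul, eval_pow, eval_sub, eval_X, eval_C]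
      nlinarith [sq_nonneg (x₀ - t₁)]
    · simp only [eval_mul, eval_pow, eval_sub, eval_X, eval_C]
      nlinarith [sq_nonneg (x₁ - t₁)]
    · rw [natDegree_mul (pow_ne_zero 2 hX1) hX2, natDegree_pow, natDegree_X_sub_C]
      have : (C t₂ - X : Polynomial ℝ) = -(X - C t₂) := by ring
      rw [this, natDegree_neg, natDegree_X_sub_C]
end

section
/- For any finite 0-1 sequence ω = (ω_0, ..., ω_n), the minimal degree τ(ω) of a nonzero polynomial p with p(t_i) = 0 for i = 1,...,n and p(x_j) ≥ 0 whenever ω_j = 1 (for any fixed nodes t_1 < ... < t_n and points x_j ∈ (t_j, t_{j+1}) at positions with ω_j = 1, where t_0 = -∞, t_{n+1} = +∞) equals n - 1 + N(ω) - K(ω) + ν(ω), where N(ω) is the number of 1-digits, K(ω) is the number of inner blocks of 0's of odd length, and ν(ω) = 1 if ω is identically 0 and ν(ω) = 0 otherwise. Moreover an extremal polynomial can be chosen as a product of linear factors (x - t_i) only. -/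
/-!
Write a competitor as `p = (∏ i, (X - C (t i))) * q`. At a point `x_j` the node product has
the sign `(-1) ^ (n - j)`, so at the points `x_{g 0} < x_{g 1} < ⋯`, where `g` enumerates the
positions of the `1`'s, the polynomial `q` must weakly take the signs `(-1) ^ (n - g k)`. This
sign pattern changes once for every odd gap `g (k + 1) - g k`, and each change costs `q` a real
root; conversely a root of `q` at the node `t_{g k}` for every odd gap realises the pattern.
Hence `τ(ω) = n + #(odd gaps)`, and `#(odd gaps) = (N - 1) - K` because a gap is even exactly
when the block of zeros inside it is an inner block of odd length.
-/

open Polynomial Classical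

/-- `N(ω)` : the number of `1` digits among `ω_0,…,ω_n`. -/
def Ncount (n : ℕ) (ω : ℕ → Bool) : ℕ :=
  ((Finset.range (n + 1)).filter fun j => ω j = true).card

/-- `K(ω)` : the number of inner blocks of `0` digits of odd length in `(ω_0,…,ω_n)`.
An inner block is a maximal run `ω_l = … = ω_r = 0` with `ω_{l-1} = ω_{r+1} = 1`. -/
def Kcount (n : ℕ) (ω : ℕ → Bool) : ℕ :=
  (((Finset.range (n + 1)) ×ˢ (Finset.range (n + 1))).filter fun lr =>
    lr.1 ≤ lr.2 ∧ 0 < lr.1 ∧ lr.2 < n ∧ ω (lr.1 - 1) = true ∧ ω (lr.2 + 1) = true ∧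
      (∀ j ∈ Finset.Icc lr.1 lr.2, ω j = false) ∧ (lr.2 - lr.1) % 2 = 0).card

/-- `ν(ω)` : equals `1` if all digits of `(ω_0,…,ω_n)` are `0`, otherwise `0`. -/
noncomputable def nuCount (n : ℕ) (ω : ℕ → Bool) : ℕ :=
  if ∀ j ∈ Finset.range (n + 1), ω j = false then 1 else 0

open Finset

theorem Continuous.mul_pos_of_forall_ne_zero {f : ℝ → ℝ} (hf : Continuous f)
    (h : ∀ u, f u ≠ 0) (u v : ℝ) : 0 < f u * f v := by
  by_contra! hle
  have h0 : (0 : ℝ) ∈ Set.uIcc (f u) (f v) := by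
    rcases mul_nonpos_iff.1 hle with ⟨hu, hv⟩ | ⟨hu, hv⟩
    · exact Set.mem_uIcc.2 (Or.inr ⟨hv, hu⟩)
    · exact Set.mem_uIcc.2 (Or.inl ⟨hu, hv⟩)
  obtain ⟨c, -, hc⟩ := intermediate_value_uIcc hf.continuousOn h0
  exact h c hc

theorem Multiset.countP_le_eq_add_countP_Ioc (s : Multiset ℝ) {u v : ℝ} (huv : u ≤ v) :
    s.countP (· ≤ v) = s.countP (· ≤ u) + s.countP (fun r => u < r ∧ r ≤ v) := by
  induction s using Multiset.induction_on with
  | empty => simp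
  | cons r s ih =>
    simp only [Multiset.countP_cons, ih]
    split_ifs <;> grind

theorem Multiset.countP_le_add_countP_lt_eq_card (s : Multiset ℝ) (u : ℝ) :
    s.countP (· ≤ u) + s.countP (u < ·) = Multiset.card s := by
  simp_rw [Multiset.card_eq_countP_add_countP (· ≤ u) s, not_le]

theorem add_mod_two_eq_zero_of_neg_one_pow_mul {a b : ℕ} {v : ℝ} (ha : 0 ≤ (-1) ^ a * v)
    (hb : 0 < (-1) ^ b * v) : (a + b) % 2 = 0 := by
  rcases Nat.even_or_odd a with ha' | ha' <;> rcases Nat.even_or_odd b with hb' | hb' <;>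
    simp only [ha'.neg_one_pow, hb'.neg_one_pow] at ha hb
  · exact Nat.even_iff.1 (ha'.add hb')
  · linarith
  · linarith
  · exact Nat.even_iff.1 (ha'.add_odd hb')

/-- The number of sign changes of the sequence `(-1) ^ a 0, …, (-1) ^ a m`. -/
def parityChanges (a : ℕ → ℕ) (m : ℕ) : ℕ :=
  ∑ k ∈ range m, (a k + a (k + 1)) % 2

theorem card_filter_parity_change_eq_parityChanges (a : ℕ → ℕ) (m : ℕ) :
    #{i ∈ range m | (a i + a (i + 1)) % 2 = 1} = parityChanges a m := by
  rw [card_filter, parityChanges]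
  exact sum_congr rfl fun i _ => by split_ifs <;> omega

theorem card_filter_parity_change_and_le_mod_two (a : ℕ → ℕ) {k m : ℕ} (hkm : k ≤ m) :
    #{i ∈ range m | (a i + a (i + 1)) % 2 = 1 ∧ k ≤ i} % 2 = (a k + a m) % 2 := by
  induction m, hkm using Nat.le_induction with
  | base =>
    rw [card_eq_zero.2 (filter_eq_empty_iff.2 fun i hi h => by simp at hi; omega)]
    omega
  | succ m hkm ih =>
    rw [range_add_one, filter_insert]
    split_ifs with h
    · rw [card_insert_of_notMem (by simp)]
      omega
    · omega

namespace Polynomial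

theorem prod_X_sub_C_dvd_of_eval_eq_zero {K ι : Type*} [Field K] {s : Finset ι} {z : ι → K}
    (hz : Set.InjOn z s) {p : K[X]} (hp : ∀ i ∈ s, p.eval (z i) = 0) :
    ∏ i ∈ s, (X - C (z i)) ∣ p :=
  prod_dvd_of_coprime
    (fun _ hi _ hj hij => isCoprime_X_sub_C_of_isUnit_sub (sub_ne_zero.2 (hz.ne hi hj hij)).isUnit)
    fun i hi => dvd_iff_isRoot.2 (hp i hi)

theorem prod_X_sub_C_mul_prod_eq_prod_pow {R : Type*} [CommRing R] {n : ℕ} (t : Fin n → R)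
    {s : Finset ℕ} {g : ℕ → ℕ} (hg : Set.InjOn g s) (hgs : ∀ k ∈ s, g k < n) :
    (∏ i, (X - C (t i))) * ∏ k ∈ s, (X - C (Function.extend Fin.val t 0 (g k))) =
      ∏ i : Fin n, (X - C (t i)) ^ if (i : ℕ) ∈ s.image g then 2 else 1 := by
  set T : ℕ → R := Function.extend Fin.val t 0
  have hT : ∀ i : Fin n, T i = t i := Fin.val_injective.extend_apply t 0
  have hsub : s.image g ⊆ range n := fun i hi => by
    obtain ⟨k, hk, rfl⟩ := mem_image.1 hi
    exact mem_range.2 (hgs k hk)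
  have hextend : ∏ i ∈ s.image g, (X - C (T i)) =
      ∏ i ∈ range n, if i ∈ s.image g then X - C (T i) else 1 := by
    rw [prod_ite_mem, inter_eq_right.2 hsub]
  simp_rw [← hT]
  rw [Fin.prod_univ_eq_prod_range (fun i => (X - C (T i)) ^ if i ∈ s.image g then 2 else 1),
    Fin.prod_univ_eq_prod_range (fun i => X - C (T i)), ← prod_image (f := fun i => X - C (T i)) hg,
    hextend, ← prod_mul_distrib]
  exact prod_congr rfl fun i _ => by split_ifs <;> ring

-- `(-1) ^ e` is the sign of the leading coefficient
theorem exists_neg_one_pow_countP_roots_mul_eval_pos {q : ℝ[X]} (hq : q ≠ 0) :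
    ∃ e : ℕ, ∀ u, q.eval u ≠ 0 → 0 < (-1) ^ (e + q.roots.countP (u < ·)) * q.eval u := by
  induction h : Multiset.card q.roots generalizing q with
  | zero =>
    have hroot : ∀ u, q.eval u ≠ 0 := fun u hu =>
      Multiset.notMem_zero u (Multiset.card_eq_zero.1 h ▸ (mem_roots hq).2 hu)
    refine ⟨if 0 < q.eval 0 then 0 else 1, fun u _ => ?_⟩
    have hsign := q.continuous.mul_pos_of_forall_ne_zero hroot u 0
    simp only [Multiset.card_eq_zero.1 h, Multiset.countP_zero, add_zero]
    split_ifs with h0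
    · simpa using pos_of_mul_pos_left hsign h0.le
    · have h0' : q.eval 0 < 0 := lt_of_le_of_ne (not_lt.1 h0) (hroot 0)
      simp only [pow_one, neg_one_mul, neg_pos]
      nlinarith
  | succ m ih =>
    obtain ⟨r, hr⟩ :=
      Multiset.card_pos_iff_exists_mem.1 (h ▸ m.succ_pos : 0 < Multiset.card q.roots)
    obtain ⟨q', rfl⟩ := dvd_iff_isRoot.2 (isRoot_of_mem_roots hr)
    have hq' : q' ≠ 0 := right_ne_zero_of_mul hq
    rw [roots_mul hq, roots_X_sub_C, Multiset.singleton_add] at h ⊢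
    obtain ⟨e, he⟩ := ih hq' (by simpa using h)
    refine ⟨e, fun u hu => ?_⟩
    rw [eval_mul] at hu ⊢
    have hur : u - r ≠ 0 := by simpa using left_ne_zero_of_mul hu
    have hq'u := he u (right_ne_zero_of_mul hu)
    rw [Multiset.countP_cons]
    simp only [eval_sub, eval_X, eval_C]
    split_ifs with hlt
    · rw [← add_assoc, pow_succ]
      nlinarith
    · have : 0 < u - r := lt_of_le_of_ne (by linarith [not_lt.1 hlt]) (Ne.symm hur)
      simpa [mul_left_comm] using mul_pos this hq'u

section SignChanges

variable {q : ℝ[X]} {y : ℕ → ℝ} {a : ℕ → ℕ} {M : ℕ}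

/- Scanning the points from left to right, the parity of the number of roots beyond `y m`
records the sign of `q` at `y m` whenever `q (y m) ≠ 0`; a change of the prescribed sign that is
not matched there has to be paid for by a root in `(y m, y (m + 1)]`. -/
theorem parityChanges_add_le_countP_roots (hq : q ≠ 0) {e : ℕ}
    (he : ∀ u, q.eval u ≠ 0 → 0 < (-1) ^ (e + q.roots.countP (u < ·)) * q.eval u)
    (hy : StrictMonoOn y (Set.Iio M)) (ha : ∀ k < M, 0 ≤ (-1) ^ a k * q.eval (y k)) :
    ∀ m < M, parityChanges a m + (a m + e + q.roots.countP (y m < ·)) % 2 ≤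
      q.roots.countP (· ≤ y m) := by
  have hsign : ∀ m < M, q.eval (y m) ≠ 0 → (a m + e + q.roots.countP (y m < ·)) % 2 = 0 :=
    fun m hm hne => by
      simpa [add_assoc] using add_mod_two_eq_zero_of_neg_one_pow_mul (ha m hm) (he _ hne)
  intro m hm
  induction m with
  | zero =>
    by_cases h0 : q.eval (y 0) = 0
    · have : 0 < q.roots.countP (· ≤ y 0) :=
        Multiset.countP_pos_of_mem ((mem_roots hq).2 h0) le_rfl
      simp only [parityChanges, range_zero, sum_empty]
      omega
    · simp [parityChanges, hsign 0 hm h0]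
  | succ m ih =>
    have hlt : y m < y (m + 1) := hy (by simp; omega) (by simpa using hm) (Nat.lt_add_one m)
    have hle := q.roots.countP_le_eq_add_countP_Ioc hlt.le
    have hcard := q.roots.countP_le_add_countP_lt_eq_card (y m)
    have hcard' := q.roots.countP_le_add_countP_lt_eq_card (y (m + 1))
    have hstep : parityChanges a (m + 1) = parityChanges a m + (a m + a (m + 1)) % 2 :=
      sum_range_succ _ _
    specialize ih (by omega)
    by_cases h0 : q.eval (y (m + 1)) = 0
    · have : 0 < q.roots.countP (fun r => y m < r ∧ r ≤ y (m + 1)) :=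
        Multiset.countP_pos_of_mem ((mem_roots hq).2 h0) ⟨hlt, le_rfl⟩
      omega
    · have := hsign (m + 1) hm h0
      omega

theorem parityChanges_le_natDegree (hq : q ≠ 0) (hy : StrictMonoOn y (Set.Iio M))
    (ha : ∀ k < M, 0 ≤ (-1) ^ a k * q.eval (y k)) : parityChanges a (M - 1) ≤ q.natDegree := by
  obtain ⟨e, he⟩ := exists_neg_one_pow_countP_roots_mul_eval_pos hq
  rcases Nat.eq_zero_or_pos M with rfl | hM
  · simp [parityChanges]
  calc parityChanges a (M - 1)
      ≤ q.roots.countP (· ≤ y (M - 1)) :=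
        le_self_add.trans (parityChanges_add_le_countP_roots hq he hy ha _ (by omega))
    _ ≤ Multiset.card q.roots := Multiset.countP_le_card _ _
    _ ≤ q.natDegree := card_roots' q

theorem neg_one_pow_card_mul_eval_prod_X_sub_C_pos {ι : Type*} (s : Finset ι) {z : ι → ℝ}
    {u : ℝ} (hu : ∀ i ∈ s, z i ≠ u) :
    0 < (-1) ^ #{i ∈ s | u < z i} * (∏ i ∈ s, (X - C (z i))).eval u := by
  rw [eval_prod, ← prod_const, prod_filter, ← prod_mul_distrib]
  refine prod_pos fun i hi => ?_
  simp only [eval_sub, eval_X, eval_C]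
  split_ifs with h
  · linarith
  · linarith [lt_of_le_of_ne (not_lt.1 h) (hu i hi)]

theorem neg_one_pow_mul_eval_prod_parity_change_pos {z : ℕ → ℝ}
    (hy : StrictMonoOn y (Set.Iio M)) (hz : ∀ k, k + 1 < M → y k < z k ∧ z k < y (k + 1))
    (a : ℕ → ℕ) {k : ℕ} (hk : k < M) :
    0 < (-1) ^ (a k + a (M - 1)) *
      (∏ i ∈ range (M - 1) with (a i + a (i + 1)) % 2 = 1, (X - C (z i))).eval (y k) := by
  have hcmp : ∀ i, i + 1 < M → (k ≤ i → y k < z i) ∧ (i < k → z i < y k) := fun i hi =>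
    ⟨fun h => (hy.monotoneOn (by simp; omega) (by simp; omega) h).trans_lt (hz i hi).1,
      fun h => (hz i hi).2.trans_le (hy.monotoneOn (by simp; omega) (by simp; omega) h)⟩
  have hsign := neg_one_pow_card_mul_eval_prod_X_sub_C_pos
    (range (M - 1) |>.filter fun i => (a i + a (i + 1)) % 2 = 1) (z := z) (u := y k)
    fun i hi => by
      simp only [mem_filter, mem_range] at hi
      rcases le_or_gt k i with h | h
      · exact ((hcmp i (by omega)).1 h).ne'
      · exact ((hcmp i (by omega)).2 h).ne
  rw [filter_filter, filter_congr (q := fun i => (a i + a (i + 1)) % 2 = 1 ∧ k ≤ i)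
    (fun i hi => and_congr_right fun _ => by
      have := hcmp i (by simp at hi; omega)
      exact ⟨fun h => not_lt.1 fun h' => (this.2 h').not_gt h, this.1⟩),
    neg_one_pow_eq_pow_mod_two, card_filter_parity_change_and_le_mod_two a (by omega)] at hsign
  rwa [neg_one_pow_eq_pow_mod_two]

end SignChanges

end Polynomial

/-- `u` lies between the nodes `t (j - 1)` and `t j`, i.e. in the gap of index `j`
(which is unbounded for `j = 0` and `j = n`). -/
def InGap {n : ℕ} (t : Fin n → ℝ) (j : ℕ) (u : ℝ) : Prop :=
  (∀ i : Fin n, (i : ℕ) < j → t i < u) ∧ ∀ i : Fin n, j ≤ (i : ℕ) → u < t i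

namespace InGap

variable {n j j' : ℕ} {t : Fin n → ℝ} {u u' : ℝ}

theorem lt (h : InGap t j u) (h' : InGap t j' u') (hjj' : j < j') (hj' : j' ≤ n) : u < u' :=
  (h.2 ⟨j, by omega⟩ le_rfl).trans (h'.1 ⟨j, by omega⟩ hjj')

theorem neg_one_pow_mul_eval_prod_pos (h : InGap t j u) :
    0 < (-1) ^ (n - j) * (∏ i, (X - C (t i))).eval u := by
  have hcard : #{i | u < t i} = n - j := by
    rw [filter_congr (q := fun i : Fin n => ¬(i : ℕ) < j) fun i _ =>
      ⟨fun hu hij => (h.1 i hij).not_gt hu, fun hij => h.2 i (not_lt.1 hij)⟩]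
    have := card_filter_add_card_filter_not (s := univ) (p := fun i : Fin n => (i : ℕ) < j)
    rw [Fin.card_filter_val_lt, card_univ, Fintype.card_fin] at this
    omega
  rw [← hcard]
  refine neg_one_pow_card_mul_eval_prod_X_sub_C_pos _ fun i _ hiu => ?_
  rcases lt_or_ge (i : ℕ) j with hij | hij
  · exact (h.1 i hij).ne hiu
  · exact (h.2 i hij).ne' hiu

end InGap

section Interlacing

variable {n N : ℕ} {t : Fin n → ℝ} {g : ℕ → ℕ} {y : ℕ → ℝ}

theorem strictMonoOn_of_inGap (hg : StrictMonoOn g (Set.Iio N)) (hgn : ∀ k < N, g k ≤ n)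
    (hy : ∀ k < N, InGap t (g k) (y k)) : StrictMonoOn y (Set.Iio N) :=
  fun _ hk _ hl hkl => (hy _ hk).lt (hy _ hl) (hg hk hl hkl) (hgn _ hl)

theorem add_parityChanges_le_natDegree (ht : Function.Injective t)
    (hg : StrictMonoOn g (Set.Iio N)) (hgn : ∀ k < N, g k ≤ n)
    (hy : ∀ k < N, InGap t (g k) (y k)) {p : ℝ[X]} (hp : p ≠ 0)
    (hpt : ∀ i, p.eval (t i) = 0) (hpy : ∀ k < N, 0 ≤ p.eval (y k)) :
    n + parityChanges (fun k => n - g k) (N - 1) ≤ p.natDegree := by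
  obtain ⟨q, rfl⟩ := prod_X_sub_C_dvd_of_eval_eq_zero (s := univ) ht.injOn fun i _ => hpt i
  have hq : q ≠ 0 := right_ne_zero_of_mul hp
  rw [natDegree_mul (left_ne_zero_of_mul hp) hq, natDegree_finsetProd_X_sub_C_eq_card, card_univ,
    Fintype.card_fin]
  refine Nat.add_le_add_left (parityChanges_le_natDegree hq
    (strictMonoOn_of_inGap hg hgn hy) fun k hk => ?_) n
  have hsign := (hy k hk).neg_one_pow_mul_eval_prod_pos
  have hsq : ((-1 : ℝ) ^ (n - g k)) ^ 2 = 1 := by rw [← pow_mul, pow_mul', neg_one_sq, one_pow]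
  refine nonneg_of_mul_nonneg_right ((hpy k hk).trans_eq ?_) hsign
  rw [eval_mul]
  linear_combination -((∏ i, (X - C (t i))).eval (y k) * q.eval (y k)) * hsq

theorem exists_C_mul_prod_X_sub_C_pow_of_inGap (hg : StrictMonoOn g (Set.Iio N))
    (hgn : ∀ k < N, g k ≤ n) (hy : ∀ k < N, InGap t (g k) (y k)) :
    ∃ p : ℝ[X], p ≠ 0 ∧ (∀ i, p.eval (t i) = 0) ∧ (∀ k < N, 0 ≤ p.eval (y k)) ∧
      p.natDegree = n + parityChanges (fun k => n - g k) (N - 1) ∧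
      ∃ (r : Fin n → ℕ) (c : ℝ), (c = 1 ∨ c = -1) ∧ p = C c * ∏ i, (X - C (t i)) ^ r i := by
  set T : ℕ → ℝ := Function.extend Fin.val t 0
  have hT : ∀ i : Fin n, T i = t i := Fin.val_injective.extend_apply t 0
  set a : ℕ → ℕ := fun k => n - g k
  set F := {k ∈ range (N - 1) | (a k + a (k + 1)) % 2 = 1}
  have hF : ∀ k ∈ F, k + 1 < N := fun k hk => by
    simp only [F, mem_filter, mem_range] at hk
    omega
  have hgF : ∀ k ∈ F, g k < n := fun k hk =>
    (hg (Set.mem_Iio.2 (by have := hF k hk; omega)) (hF k hk) (Nat.lt_add_one k)).trans_le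
      (hgn _ (hF k hk))
  set c : ℝ := (-1) ^ a (N - 1)
  have hc : c = 1 ∨ c = -1 := neg_one_pow_eq_or ℝ _
  have hc0 : c ≠ 0 := pow_ne_zero _ (neg_ne_zero.2 one_ne_zero)
  have hprod := prod_X_sub_C_mul_prod_eq_prod_pow t
    (hg.injOn.mono fun k hk => Set.mem_Iio.2 (by have := hF k hk; omega)) hgF
  have hmonic : (∏ i, (X - C (t i))).Monic := monic_prod_of_monic _ _ fun i _ => monic_X_sub_C _
  -- a second root at the node `t (g k)`, between `y k` and `y (k + 1)`, for every `k ∈ F`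
  refine ⟨C c * ∏ i : Fin n, (X - C (t i)) ^ if (i : ℕ) ∈ F.image g then 2 else 1, ?_,
    fun i => ?_, fun k hk => ?_, ?_, _, c, hc, rfl⟩
  · exact mul_ne_zero (C_ne_zero.2 hc0)
      (monic_prod_of_monic _ _ fun i _ => (monic_X_sub_C _).pow _).ne_zero
  · rw [eval_mul, eval_prod, prod_eq_zero (mem_univ i) (by split_ifs <;> simp), mul_zero]
  · have hz : ∀ k, k + 1 < N → y k < T (g k) ∧ T (g k) < y (k + 1) := fun k hk => by
      have hgk := hg (Set.mem_Iio.2 (by omega)) hk (Nat.lt_add_one k)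
      have hgkn : g k < n := hgk.trans_le (hgn _ hk)
      rw [show g k = ((⟨g k, hgkn⟩ : Fin n) : ℕ) from rfl, hT]
      exact ⟨(hy k (by omega)).2 _ le_rfl, (hy _ hk).1 _ hgk⟩
    have hP := (hy k hk).neg_one_pow_mul_eval_prod_pos
    have hQ := neg_one_pow_mul_eval_prod_parity_change_pos (strictMonoOn_of_inGap hg hgn hy)
      hz a hk
    have hsq : ((-1 : ℝ) ^ (n - g k)) ^ 2 = 1 := by rw [← pow_mul, pow_mul', neg_one_sq, one_pow]
    rw [← hprod, eval_mul, eval_C, eval_mul]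
    refine (mul_pos hP hQ).le.trans_eq ?_
    simp only [pow_add]
    linear_combination ((∏ i, (X - C (t i))).eval (y k) *
      (∏ k ∈ F, (X - C (T (g k)))).eval (y k) * c) * hsq
  · rw [natDegree_C_mul hc0, ← hprod,
      hmonic.natDegree_mul (monic_prod_of_monic _ _ fun i _ => monic_X_sub_C _),
      natDegree_finsetProd_X_sub_C_eq_card, natDegree_finsetProd_X_sub_C_eq_card, card_univ,
      Fintype.card_fin, card_filter_parity_change_eq_parityChanges]

end Interlacing

namespace Nat

variable {p : ℕ → Prop} [DecidablePred p]

theorem nth_mem_of_lt_count {k m : ℕ} (h : k < count p m) : p (nth p k) :=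
  nth_mem k fun hf => h.trans_le (count_le_card hf m)

theorem nth_strictMonoOn_Iio_count (m : ℕ) : StrictMonoOn (nth p) (Set.Iio (count p m)) :=
  fun _ _ _ hl hkl => nth_lt_nth' hkl fun hf => (Set.mem_Iio.1 hl).trans_le (count_le_card hf m)

end Nat

section Ones

variable {n N : ℕ} {ω : ℕ → Bool} {g : ℕ → ℕ}

theorem Ncount_eq_of_enum (hg : StrictMonoOn g (Set.Iio N))
    (hgω : ∀ k < N, g k ≤ n ∧ ω (g k) = true) (hsurj : ∀ j ≤ n, ω j = true → ∃ k < N, g k = j) :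
    Ncount n ω = N := by
  have himage : (range N).image g = {j ∈ range (n + 1) | ω j = true} := by
    ext j
    simp only [mem_filter, mem_range, mem_image]
    constructor
    · rintro ⟨k, hk, rfl⟩
      exact ⟨by have := (hgω k hk).1; omega, (hgω k hk).2⟩
    · rintro ⟨hj, hω⟩
      exact hsurj j (by omega) hω
  rw [Ncount, ← himage, card_image_of_injOn (by rw [coe_range]; exact hg.injOn), card_range]

theorem Kcount_eq_of_enum (hg : StrictMonoOn g (Set.Iio N))
    (hgω : ∀ k < N, g k ≤ n ∧ ω (g k) = true) (hsurj : ∀ j ≤ n, ω j = true → ∃ k < N, g k = j) :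
    Kcount n ω = #{k ∈ range (N - 1) | (g (k + 1) - g k) % 2 = 0} := by
  have hlt : ∀ {k l}, k < N → l < N → (g k < g l ↔ k < l) := fun hk hl => hg.lt_iff_lt hk hl
  have hgap : ∀ k j, k + 1 < N → g k < j → j < g (k + 1) → ω j = false := fun k j hk h1 h2 => by
    by_contra hω
    obtain ⟨m, hm, rfl⟩ := hsurj j (by have := (hgω _ hk).1; omega) (by simpa using hω)
    rw [hlt (by omega) hm] at h1
    rw [hlt hm hk] at h2
    omega
  rw [Kcount]
  symm
  refine card_bij (fun k _ => (g k + 1, g (k + 1) - 1)) (fun k hk => ?_) (fun k hk k' hk' h => ?_)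
    fun ⟨l, r⟩ hlr => ?_
  · simp only [mem_filter, mem_range] at hk
    have hgk := (hlt (k := k) (l := k + 1) (by omega) (by omega)).2 (Nat.lt_add_one k)
    have := hgω (k + 1) (by omega)
    simp only [mem_filter, mem_product, mem_range, mem_Icc, add_tsub_cancel_right]
    refine ⟨by omega, by omega, by omega, by omega, (hgω k (by omega)).2, ?_,
      fun j hj => hgap k j (by omega) (by omega) (by omega), by omega⟩
    rw [Nat.sub_add_cancel (by omega)]
    exact this.2
  · simp only [mem_filter, mem_range] at hk hk'
    exact hg.injOn (Set.mem_Iio.2 (by omega)) (Set.mem_Iio.2 (by omega))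
      (by simpa using congrArg Prod.fst h)
  · simp only [mem_filter, mem_product, mem_range, mem_Icc] at hlr
    obtain ⟨-, hlr, hl, hr, hωl, hωr, hzero, hpar⟩ := hlr
    obtain ⟨k, hk, hgk⟩ := hsurj (l - 1) (by omega) hωl
    obtain ⟨m, hm, hgm⟩ := hsurj (r + 1) (by omega) hωr
    have hkm : k < m := (hlt hk hm).1 (by omega)
    have hk1 : g (k + 1) = r + 1 := by
      have hle := hg.monotoneOn (Set.mem_Iio.2 (by omega)) hm (show k + 1 ≤ m by omega)
      have hgt := (hlt (k := k) (l := k + 1) hk (by omega)).2 (Nat.lt_add_one k)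
      by_contra hne
      have := (hgω (k + 1) (by omega)).2
      rw [hzero _ ⟨by omega, by omega⟩] at this
      exact Bool.false_ne_true this
    refine ⟨k, mem_filter.2 ⟨mem_range.2 (by omega), by omega⟩, ?_⟩
    simp only [Prod.mk.injEq]
    omega

theorem tau_value_eq_of_enum (hn : 1 ≤ n) (hg : StrictMonoOn g (Set.Iio N))
    (hgω : ∀ k < N, g k ≤ n ∧ ω (g k) = true) (hsurj : ∀ j ≤ n, ω j = true → ∃ k < N, g k = j) :
    n - 1 + Ncount n ω - Kcount n ω + nuCount n ω =
      n + parityChanges (fun k => n - g k) (N - 1) := by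
  have hnu : nuCount n ω = if N = 0 then 1 else 0 := by
    have hall : (∀ j ∈ range (n + 1), ω j = false) ↔ N = 0 := by
      refine ⟨fun h => by_contra fun hN => ?_, fun hN j hj => ?_⟩
      · have := hgω 0 (by omega)
        simp [h (g 0) (mem_range.2 (by omega))] at this
      · by_contra hω
        obtain ⟨k, hk, -⟩ := hsurj j (by simpa [Nat.lt_succ_iff] using hj) (by simpa using hω)
        omega
    simp only [nuCount, hall]
  have hsplit : #{k ∈ range (N - 1) | (g (k + 1) - g k) % 2 = 0} +
      parityChanges (fun k => n - g k) (N - 1) = N - 1 := by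
    rw [card_filter, parityChanges, ← sum_add_distrib, sum_const_nat (m := 1), card_range, mul_one]
    intro k hk
    have := hg (Set.mem_Iio.2 (by simp at hk; omega)) (Set.mem_Iio.2 (by simp at hk; omega))
      (Nat.lt_add_one k)
    have := (hgω (k + 1) (by simp at hk; omega)).1
    split_ifs <;> omega
  rw [Ncount_eq_of_enum hg hgω hsurj, Kcount_eq_of_enum hg hgω hsurj, hnu]
  split_ifs <;> omega

end Ones

/-- The minimal degree `τ(ω)` of a nonzero polynomial vanishing at the nodes
`t_1 < … < t_n` and nonnegative at the interlacing points `x_j ∈ (t_j, t_{j+1})` for the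
positions with `ω_j = 1` equals `n - 1 + N(ω) - K(ω) + ν(ω)`; moreover an extremal
polynomial can be chosen as (plus or minus) a product of linear factors `(x - t_i)`. -/
theorem tau_formula (n : ℕ) (hn : 1 ≤ n) (ω : ℕ → Bool)
    (t : Fin n → ℝ) (ht : StrictMono t) (x : ℕ → ℝ)
    (hx : ∀ j ≤ n, ω j = true → (∀ i : Fin n, (i : ℕ) < j → t i < x j) ∧
      (∀ i : Fin n, j ≤ (i : ℕ) → x j < t i)) :
    IsLeast {d | ∃ p : Polynomial ℝ, p ≠ 0 ∧ (∀ i, p.eval (t i) = 0) ∧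
        (∀ j ≤ n, ω j = true → 0 ≤ p.eval (x j)) ∧ p.natDegree = d}
      (n - 1 + Ncount n ω - Kcount n ω + nuCount n ω) ∧
    ∃ p : Polynomial ℝ, p ≠ 0 ∧ (∀ i, p.eval (t i) = 0) ∧
      (∀ j ≤ n, ω j = true → 0 ≤ p.eval (x j)) ∧
      p.natDegree = n - 1 + Ncount n ω - Kcount n ω + nuCount n ω ∧
      ∃ (r : Fin n → ℕ) (c : ℝ), (c = 1 ∨ c = -1) ∧
        p = C c * ∏ i, (X - C (t i)) ^ r i := by
  set N := Nat.count (ω · = true) (n + 1)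
  set g := Nat.nth (ω · = true)
  have hg : StrictMonoOn g (Set.Iio N) := Nat.nth_strictMonoOn_Iio_count _
  have hgω : ∀ k < N, g k ≤ n ∧ ω (g k) = true := fun k hk =>
    ⟨Nat.lt_succ_iff.1 (Nat.nth_lt_of_lt_count hk), Nat.nth_mem_of_lt_count hk⟩
  have hsurj : ∀ j ≤ n, ω j = true → ∃ k < N, g k = j := fun j hj hω =>
    ⟨_, Nat.count_strict_mono hω (Nat.lt_succ_of_le hj), Nat.nth_count hω⟩
  have hy : ∀ k < N, InGap t (g k) (x (g k)) := fun k hk => hx _ (hgω k hk).1 (hgω k hk).2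
  have hnonneg : ∀ p : ℝ[X],
      (∀ j ≤ n, ω j = true → 0 ≤ p.eval (x j)) ↔ ∀ k < N, 0 ≤ p.eval (x (g k)) := fun p =>
    ⟨fun h k hk => h _ (hgω k hk).1 (hgω k hk).2, fun h j hj hω => by
      obtain ⟨k, hk, rfl⟩ := hsurj j hj hω
      exact h k hk⟩
  rw [tau_value_eq_of_enum hn hg hgω hsurj]
  obtain ⟨p, hp, hpt, hpx, hdeg, hform⟩ :=
    exists_C_mul_prod_X_sub_C_pow_of_inGap hg (fun k hk => (hgω k hk).1) hy
  refine ⟨⟨⟨p, hp, hpt, (hnonneg p).2 hpx, hdeg⟩, ?_⟩, p, hp, hpt, (hnonneg p).2 hpx, hdeg, hform⟩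
  rintro d ⟨q, hq, hqt, hqx, rfl⟩
  exact add_parityChanges_le_natDegree ht.injective hg (fun k hk => (hgω k hk).1) hy hq hqt
    ((hnonneg q).1 hqx)
end

section
/- Let Ω ⊆ ℝ be compact and finite with #Ω > n ≥ 3. Then d_n(Ω) = n: there exists an n-dimensional subspace of polynomial functions on Ω of degree at most n with an n-element positive basis, but no such subspace exists with all basis polynomials of degree at most n-1. -/
/-- `PosBasisWithDeg Ω n d` : there is an `n`-dimensional subspace of `C(Ω)` consisting
of (restrictions of) polynomial functions with an `n`-element positive basis all of whose
elements are polynomials of degree at most `d`. -/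
def PosBasisWithDeg (Ω : Set ℝ) (n d : ℕ) : Prop :=
  ∃ bb : Fin n → (Ω → ℝ),
    (∀ i, ∃ p : Polynomial ℝ, p.natDegree ≤ d ∧ ∀ x : Ω, bb i x = p.eval (x : ℝ)) ∧
    LinearIndependent ℝ bb ∧
    ∀ f ∈ Submodule.span ℝ (Set.range bb),
      ((∀ x : Ω, 0 ≤ f x) ↔ ∃ c : Fin n → ℝ, (∀ i, 0 ≤ c i) ∧ f = ∑ i, c i • bb i)

open Polynomial Finset

lemma aux_prod_neg_sign (F : Finset ℝ) (f : ℝ → ℝ) (h : ∀ z ∈ F, f z < 0) :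
    0 < (-1 : ℝ) ^ F.card * ∏ z ∈ F, f z := by
  classical
  induction F using Finset.induction with
  | empty => simp
  | @insert a s ha ih =>
    rw [Finset.prod_insert ha, Finset.card_insert_of_notMem ha, pow_succ]
    have h1 : 0 < (-1 : ℝ) ^ s.card * ∏ z ∈ s, f z :=
      ih (fun z hz => h z (Finset.mem_insert_of_mem hz))
    have h2 : f a < 0 := h a (Finset.mem_insert_self a s)
    nlinarith

lemma aux_sign_prod (A : Finset ℝ) (y : ℝ) (hy : y ∉ A) :
    0 < (-1 : ℝ) ^ (A.filter (fun z => y < z)).card * ∏ z ∈ A, (y - z) := by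
  classical
  rw [← Finset.prod_filter_mul_prod_filter_not A (fun z => y < z)]
  have h1 := aux_prod_neg_sign (A.filter (fun z => y < z)) (fun z => y - z)
    (by intro z hz; rw [Finset.mem_filter] at hz; linarith [hz.2])
  have h2 : 0 < ∏ z ∈ A.filter (fun z => ¬ y < z), (y - z) := by
    apply Finset.prod_pos
    intro z hz
    rw [Finset.mem_filter] at hz
    have h3 : ¬ y < z := hz.2
    push_neg at h3
    have h4 : z < y := lt_of_le_of_ne h3 (fun h => hy (h ▸ hz.1))
    linarith
  calc (0:ℝ) < ((-1 : ℝ) ^ (A.filter (fun z => y < z)).card * ∏ z ∈ A.filter (fun z => y < z), (y - z)) * ∏ z ∈ A.filter (fun z => ¬ y < z), (y - z) := mul_pos h1 h2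
    _ = _ := by ring

lemma aux_prod_pos_of_even (A : Finset ℝ) (y : ℝ) (hy : y ∉ A)
    (h : Even (A.filter (fun z => y < z)).card) : 0 < ∏ z ∈ A, (y - z) := by
  have := aux_sign_prod A y hy
  rwa [h.neg_one_pow, one_mul] at this

lemma aux_prod_neg_of_odd (A : Finset ℝ) (y : ℝ) (hy : y ∉ A)
    (h : Odd (A.filter (fun z => y < z)).card) : ∏ z ∈ A, (y - z) < 0 := by
  have := aux_sign_prod A y hy
  rw [h.neg_one_pow] at this
  linarith

lemma aux_two_polys (p q : Polynomial ℝ) (s : ℕ) (hp : p.natDegree ≤ s) (hq : q.natDegree ≤ s)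
    (Z : Finset ℝ) (hZ : s ≤ Z.card) (hpZ : ∀ z ∈ Z, p.eval z = 0) (hqZ : ∀ z ∈ Z, q.eval z = 0)
    (w : ℝ) (hw : q.eval w ≠ 0) :
    ∀ y, p.eval y = (p.eval w / q.eval w) * q.eval y := by
  classical
  have hwZ : w ∉ Z := fun h => hw (hqZ w h)
  set r := Polynomial.C (q.eval w) * p - Polynomial.C (p.eval w) * q with hr
  have hrz : r = 0 := by
    apply Polynomial.eq_zero_of_natDegree_lt_card_of_eval_eq_zero' r (insert w Z)
    · intro i hi
      rcases Finset.mem_insert.mp hi with rfl | hi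
      · simp [hr]; ring
      · simp [hr, hpZ i hi, hqZ i hi]
    · have h1 : r.natDegree ≤ s := by
        apply le_trans (Polynomial.natDegree_sub_le _ _)
        simp only [max_le_iff]
        constructor
        · exact le_trans (Polynomial.natDegree_C_mul_le _ _) hp
        · exact le_trans (Polynomial.natDegree_C_mul_le _ _) hq
      rw [Finset.card_insert_of_notMem hwZ]
      omega
  intro y
  have := congrArg (Polynomial.eval y) hrz
  simp [hr] at this
  field_simp
  linarith [this]

lemma part1 (Ω : Set ℝ) (hfin : Ω.Finite) (n : ℕ) (hn : 3 ≤ n) (hcard : n < Ω.ncard) :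
    PosBasisWithDeg Ω n n := by
  classical
  have hFc : hfin.toFinset.card = Ω.ncard := (Set.ncard_eq_toFinset_card Ω hfin).symm
  set m := Ω.ncard with hm
  have hnm : n ≤ m := le_of_lt hcard
  have hmpos : 0 < m := by omega
  let x : Fin m ↪o ℝ := hfin.toFinset.orderEmbOfFin hFc
  have hxmem : ∀ r, x r ∈ Ω := fun r => hfin.mem_toFinset.mp (Finset.orderEmbOfFin_mem _ hFc r)
  have hxsurj : ∀ ω ∈ Ω, ∃ r, x r = ω := by
    intro ω hω
    have : ω ∈ Set.range (x : Fin m → ℝ) := by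
      rw [Finset.range_orderEmbOfFin]
      exact hfin.mem_toFinset.mpr hω
    exact this
  -- nodes
  let t : Fin n → ℝ := fun i => x (Fin.castLE hnm i)
  have ht_mono : StrictMono t := fun a b h => x.strictMono (by simpa using h)
  have ht_inj : Function.Injective t := ht_mono.injective
  have htΩ : ∀ i, t i ∈ Ω := fun i => hxmem _
  let A : Fin n → Finset ℝ := fun i => (Finset.image t Finset.univ).erase (t i)
  have hA : ∀ i, A i = Finset.image t (Finset.univ.erase i) := by
    intro i
    rw [show A i = (Finset.image t Finset.univ).erase (t i) from rfl,
      ← Finset.image_erase ht_inj]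
  have hAcard : ∀ i, (A i).card = n - 1 := by
    intro i
    rw [hA i, Finset.card_image_of_injective _ ht_inj, Finset.card_erase_of_mem (Finset.mem_univ i),
      Finset.card_univ, Fintype.card_fin]
  have hAmem : ∀ i z, z ∈ A i ↔ ∃ j, j ≠ i ∧ t j = z := by
    intro i z
    rw [hA i]
    simp [Finset.mem_image, Finset.mem_erase]
  have htiA : ∀ i, t i ∉ A i := fun i => Finset.notMem_erase _ _
  let u : Fin n → ℝ := fun i => if Even (n - 1 - (i : ℕ)) then x ⟨0, hmpos⟩ - 1
    else t ⟨n - 1, by omega⟩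
  let q : Fin n → Polynomial ℝ := fun i => (∏ z ∈ A i, (X - C z)) * (X - C (u i))
  have heval : ∀ i y, (q i).eval y = (∏ z ∈ A i, (y - z)) * (y - u i) := by
    intro i y
    simp [q, Polynomial.eval_prod]
  have hdeg : ∀ i, (q i).natDegree ≤ n := by
    intro i
    refine le_trans (Polynomial.natDegree_mul_le) ?_
    have h1 : (∏ z ∈ A i, (X - C z) : Polynomial ℝ).natDegree ≤ n - 1 := by
      refine le_trans (Polynomial.natDegree_prod_le _ _) ?_
      rw [← hAcard i]
      apply le_of_eq
      rw [Finset.card_eq_sum_ones]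
      exact Finset.sum_congr rfl (fun z _ => Polynomial.natDegree_X_sub_C z)
    have h2 : (X - C (u i) : Polynomial ℝ).natDegree = 1 := Polynomial.natDegree_X_sub_C _
    omega
  -- zero at other nodes
  have hqzero : ∀ i j, j ≠ i → (q i).eval (t j) = 0 := by
    intro i j hj
    rw [heval]
    have : t j ∈ A i := (hAmem i (t j)).mpr ⟨j, hj, rfl⟩
    rw [Finset.prod_eq_zero this (by ring), zero_mul]
  -- count of nodes above t i
  have hcount : ∀ i, ((A i).filter (fun z => t i < z)).card = n - 1 - (i : ℕ) := by
    intro i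
    rw [hA i, Finset.filter_image]
    rw [Finset.card_image_of_injective _ ht_inj]
    have : (Finset.univ.erase i).filter (fun j => t i < t j) = Finset.Ioi i := by
      ext j
      rw [Finset.mem_filter, Finset.mem_erase, Finset.mem_Ioi, ht_mono.lt_iff_lt]
      constructor
      · rintro ⟨_, h⟩; exact h
      · intro h; exact ⟨⟨ne_of_gt h, Finset.mem_univ j⟩, h⟩
    rw [this, Fin.card_Ioi]
  -- positive at own node
  have hqpos : ∀ i, 0 < (q i).eval (t i) := by
    intro i
    rw [heval]
    by_cases he : Even (n - 1 - (i : ℕ))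
    · have hP : 0 < ∏ z ∈ A i, (t i - z) :=
        aux_prod_pos_of_even _ _ (htiA i) (by rw [hcount i]; exact he)
      have hu : u i = x ⟨0, hmpos⟩ - 1 := if_pos he
      have hx0 : x ⟨0, hmpos⟩ ≤ t i := x.monotone (by rw [Fin.le_def]; exact Nat.zero_le _)
      rw [hu]
      have : 0 < t i - (x ⟨0, hmpos⟩ - 1) := by linarith
      exact mul_pos hP this
    · have ho : Odd (n - 1 - (i : ℕ)) := Nat.odd_iff.mpr (by
        rcases Nat.even_or_odd (n - 1 - (i : ℕ)) with h | h
        · exact absurd h he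
        · exact Nat.odd_iff.mp h)
      have hP : ∏ z ∈ A i, (t i - z) < 0 :=
        aux_prod_neg_of_odd _ _ (htiA i) (by rw [hcount i]; exact ho)
      have hu : u i = t ⟨n - 1, by omega⟩ := if_neg he
      have hi_lt : (i : ℕ) < n - 1 := by
        have := ho
        rcases this with ⟨k, hk⟩
        omega
      have : t i < t ⟨n - 1, by omega⟩ := ht_mono (by simp [Fin.lt_def]; omega)
      rw [hu]
      exact mul_pos_of_neg_of_neg hP (by linarith)
  -- positive at tail points
  have hqtail : ∀ i (r : Fin m), n ≤ (r : ℕ) → 0 < (q i).eval (x r) := by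
    intro i r hr
    rw [heval]
    have hnodes_lt : ∀ j : Fin n, t j < x r := by
      intro j
      apply x.strictMono
      simp only [Fin.lt_def, Fin.coe_castLE]
      omega
    have hP : 0 < ∏ z ∈ A i, (x r - z) := by
      apply Finset.prod_pos
      intro z hz
      obtain ⟨j, _, rfl⟩ := (hAmem i z).mp hz
      linarith [hnodes_lt j]
    have hu : u i < x r := by
      by_cases he : Even (n - 1 - (i : ℕ))
      · have : u i = x ⟨0, hmpos⟩ - 1 := if_pos he
        rw [this]
        have : x ⟨0, hmpos⟩ ≤ x r := x.monotone (by rw [Fin.le_def]; exact Nat.zero_le _)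
        linarith
      · have : u i = t ⟨n - 1, by omega⟩ := if_neg he
        rw [this]
        exact hnodes_lt _
    exact mul_pos hP (by linarith)
  -- nonneg everywhere on Ω
  have hqnonneg : ∀ i (ω : ℝ), ω ∈ Ω → 0 ≤ (q i).eval ω := by
    intro i ω hω
    obtain ⟨r, rfl⟩ := hxsurj ω hω
    rcases lt_or_ge (r : ℕ) n with h | h
    · have hxr : x r = t ⟨(r : ℕ), h⟩ := by
        show x r = x _
        congr 1
      by_cases hji : (⟨(r : ℕ), h⟩ : Fin n) = i
      · rw [hxr, hji]; exact le_of_lt (hqpos i)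
      · rw [hxr, hqzero i _ hji]
    · exact le_of_lt (hqtail i r h)
  -- the basis functions
  let bb : Fin n → (Ω → ℝ) := fun i ω => (q i).eval (ω : ℝ)
  have hbb_node : ∀ i j, (i ≠ j) → bb i ⟨t j, htΩ j⟩ = 0 := fun i j hij => hqzero i j (Ne.symm hij)
  -- linear independence
  have hli : LinearIndependent ℝ bb := by
    rw [Fintype.linearIndependent_iff]
    intro g hg j
    have := congrFun hg ⟨t j, htΩ j⟩
    rw [Finset.sum_apply] at this
    simp only [Pi.smul_apply, smul_eq_mul] at this
    have hsum : ∑ i, g i * bb i ⟨t j, htΩ j⟩ = g j * bb j ⟨t j, htΩ j⟩ := by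
      apply Finset.sum_eq_single
      · intro i _ hij
        rw [hbb_node i j hij, mul_zero]
      · intro h; exact absurd (Finset.mem_univ j) h
    rw [hsum] at this
    have : g j * (q j).eval (t j) = 0 := this
    have := hqpos j
    rcases mul_eq_zero.mp ‹g j * (q j).eval (t j) = 0› with h | h
    · exact h
    · linarith
  refine ⟨bb, fun i => ⟨q i, hdeg i, fun _ => rfl⟩, hli, ?_⟩
  intro f hf
  constructor
  · intro hfnn
    rw [Submodule.mem_span_range_iff_exists_fun] at hf
    obtain ⟨c, hc⟩ := hf
    refine ⟨c, ?_, hc.symm⟩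
    intro i
    have := congrFun hc ⟨t i, htΩ i⟩
    rw [Finset.sum_apply] at this
    simp only [Pi.smul_apply, smul_eq_mul] at this
    have hsum : ∑ j, c j * bb j ⟨t i, htΩ i⟩ = c i * bb i ⟨t i, htΩ i⟩ := by
      apply Finset.sum_eq_single
      · intro j _ hji
        rw [hbb_node j i hji, mul_zero]
      · intro h; exact absurd (Finset.mem_univ i) h
    rw [hsum] at this
    have h1 : 0 ≤ c i * (q i).eval (t i) := by
      rw [show c i * (q i).eval (t i) = f ⟨t i, htΩ i⟩ from this]
      exact hfnn _
    have h2 := hqpos i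
    by_contra hneg
    push_neg at hneg
    nlinarith
  · rintro ⟨c, hcnn, rfl⟩ ω
    rw [Finset.sum_apply]
    apply Finset.sum_nonneg
    intro i _
    simp only [Pi.smul_apply, smul_eq_mul]
    exact mul_nonneg (hcnn i) (hqnonneg i ω ω.2)

lemma part2 (Ω : Set ℝ) (hfin : Ω.Finite) (n d : ℕ) (hn : 3 ≤ n) (hcard : n < Ω.ncard)
    (hdn : d ≤ n - 1) (h : PosBasisWithDeg Ω n d) : False := by
  classical
  have hFc : hfin.toFinset.card = Ω.ncard := (Set.ncard_eq_toFinset_card Ω hfin).symm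
  set m := Ω.ncard with hm
  have hnm : n + 1 ≤ m := hcard
  let x : Fin m ↪o ℝ := hfin.toFinset.orderEmbOfFin hFc
  have hxmem : ∀ r, x r ∈ Ω := fun r => hfin.mem_toFinset.mp (Finset.orderEmbOfFin_mem _ hFc r)
  have hxsurj : ∀ ω ∈ Ω, ∃ r, x r = ω := by
    intro ω hω
    have : ω ∈ Set.range (x : Fin m → ℝ) := by
      rw [Finset.range_orderEmbOfFin]
      exact hfin.mem_toFinset.mpr hω
    exact this
  -- the index sets
  let J : Fin (n + 1) → Finset ℕ := fun k =>
    if (k : ℕ) = n then (Finset.range n).erase ((n - 1) % 2)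
    else Finset.range k ∪ Finset.Ico (m - (n - 1) + k) m
  have hmemJ : ∀ (k : Fin (n + 1)) (j : ℕ), j ∈ J k ↔
      (if (k : ℕ) = n then (j ≠ (n - 1) % 2 ∧ j < n)
       else (j < (k : ℕ) ∨ (m - (n - 1) + (k : ℕ) ≤ j ∧ j < m))) := by
    intro k j
    by_cases hk : (k : ℕ) = n <;>
      simp [J, hk, Finset.mem_erase, Finset.mem_range, Finset.mem_union, Finset.mem_Ico]
  have hJr : ∀ k, ∀ j ∈ J k, j < m := by
    intro k j hj
    rw [hmemJ] at hj
    have hk := k.isLt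
    split_ifs at hj with h <;> omega
  have hJcard : ∀ k, (J k).card = n - 1 := by
    intro k
    by_cases hk : (k : ℕ) = n
    · show ((if (k : ℕ) = n then _ else _ : Finset ℕ)).card = n - 1
      rw [if_pos hk, Finset.card_erase_of_mem (Finset.mem_range.mpr (by omega)),
        Finset.card_range]
    · show ((if (k : ℕ) = n then _ else _ : Finset ℕ)).card = n - 1
      rw [if_neg hk]
      have hk' : (k : ℕ) ≤ n - 1 := by have := k.isLt; omega
      rw [Finset.card_union_of_disjoint (by
        rw [Finset.disjoint_left]
        intro j hj1 hj2
        rw [Finset.mem_range] at hj1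
        rw [Finset.mem_Ico] at hj2
        omega)]
      rw [Finset.card_range, Nat.card_Ico]
      omega
  let I : (k : Fin (n + 1)) → Finset (Fin m) := fun k => (J k).attachFin (hJr k)
  have hmemI : ∀ k (r : Fin m), r ∈ I k ↔ (r : ℕ) ∈ J k := fun k r => Finset.mem_attachFin _
  let A : Fin (n + 1) → Finset ℝ := fun k => (I k).image (fun r => x r)
  have hAcard : ∀ k, (A k).card = n - 1 := by
    intro k
    rw [show A k = (I k).image (fun r => x r) from rfl,
      Finset.card_image_of_injective _ x.injective, Finset.card_attachFin, hJcard]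
  have hAmemx : ∀ k (r : Fin m), x r ∈ A k ↔ (r : ℕ) ∈ J k := by
    intro k r
    rw [show A k = (I k).image (fun r => x r) from rfl]
    constructor
    · intro hr
      obtain ⟨a, ha, hax⟩ := Finset.mem_image.mp hr
      obtain rfl : a = r := x.injective hax
      exact (hmemI k a).mp ha
    · intro hr
      exact Finset.mem_image.mpr ⟨r, (hmemI k r).mpr hr, rfl⟩
  have hAsubΩ : ∀ k z, z ∈ A k → z ∈ Ω := by
    intro k z hz
    obtain ⟨a, _, rfl⟩ := Finset.mem_image.mp hz
    exact hxmem a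
  -- the polynomials
  let P : Fin (n + 1) → Polynomial ℝ := fun k =>
    Polynomial.C ((-1 : ℝ) ^ (n - 1 - (k : ℕ))) * ∏ z ∈ A k, (X - C z)
  have hevalP : ∀ k y, (P k).eval y = (-1 : ℝ) ^ (n - 1 - (k : ℕ)) * ∏ z ∈ A k, (y - z) := by
    intro k y
    simp [P, Polynomial.eval_prod]
  have hdegP : ∀ k, (P k).natDegree ≤ n - 1 := by
    intro k
    refine le_trans Polynomial.natDegree_mul_le ?_
    rw [Polynomial.natDegree_C, zero_add]
    refine le_trans (Polynomial.natDegree_prod_le _ _) ?_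
    rw [← hAcard k]
    apply le_of_eq
    rw [Finset.card_eq_sum_ones]
    exact Finset.sum_congr rfl (fun z _ => Polynomial.natDegree_X_sub_C z)
  -- transfer of filter cardinalities
  have hfiltercard : ∀ (S : Finset ℕ) (hS : ∀ j ∈ S, j < m) (r : Fin m),
      ((S.attachFin hS).filter (fun a => r < a)).card
        = (S.filter (fun j => (r : ℕ) < j)).card := by
    intro S hS r
    apply Finset.card_bij (fun (a : Fin m) _ => (a : ℕ))
    · intro a ha
      rw [Finset.mem_filter] at ha ⊢
      exact ⟨(Finset.mem_attachFin _).mp ha.1, ha.2⟩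
    · intro a _ b _ hab
      exact Fin.ext hab
    · intro j hj
      rw [Finset.mem_filter] at hj
      refine ⟨⟨j, hS j hj.1⟩, ?_, rfl⟩
      rw [Finset.mem_filter]
      exact ⟨(Finset.mem_attachFin _).mpr hj.1, hj.2⟩
  -- the count of zeros above a non-zero point
  have hcount : ∀ (k : Fin (n + 1)) (r : Fin m), (r : ℕ) ∉ J k →
      ((A k).filter (fun z => x r < z)).card = ((J k).filter (fun j => (r : ℕ) < j)).card := by
    intro k r _
    rw [show A k = (I k).image (fun r => x r) from rfl, Finset.filter_image,
      Finset.card_image_of_injective _ x.injective]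
    have : (I k).filter (fun a => x r < x a) = (I k).filter (fun a => r < a) :=
      Finset.filter_congr (by intro a _; simp [x.lt_iff_lt])
    rw [this]
    exact hfiltercard _ _ r
  have hJfc : ∀ (k : Fin (n + 1)) (r : Fin m), (r : ℕ) ∉ J k →
      (-1 : ℝ) ^ ((J k).filter (fun j => (r : ℕ) < j)).card = (-1 : ℝ) ^ (n - 1 - (k : ℕ)) := by
    intro k r hr
    by_cases hk : (k : ℕ) = n
    · have hJk : J k = (Finset.range n).erase ((n - 1) % 2) := if_pos hk
      rw [hmemJ, if_pos hk] at hr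
      push_neg at hr
      rcases lt_or_ge (r : ℕ) n with h0 | h0
      · -- r is the removed point
        have hreq : (r : ℕ) = (n - 1) % 2 := by
          by_contra hne
          have := hr hne
          omega
        have hfe : (J k).filter (fun j => (r : ℕ) < j)
            = Finset.Ico ((n - 1) % 2 + 1) n := by
          ext j
          rw [Finset.mem_filter, hJk, Finset.mem_erase, Finset.mem_range, Finset.mem_Ico, hreq]
          omega
        rw [hfe, Nat.card_Ico]
        have he1 : Even (n - ((n - 1) % 2 + 1)) := by
          rw [Nat.even_iff]; omega
        have he2 : n - 1 - (k : ℕ) = 0 := by omega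
        rw [he1.neg_one_pow, he2, pow_zero]
      · -- r is beyond all points of J k
        have hfe : (J k).filter (fun j => (r : ℕ) < j) = ∅ := by
          apply Finset.filter_false_of_mem
          intro j hj
          rw [hJk, Finset.mem_erase, Finset.mem_range] at hj
          omega
        have he2 : n - 1 - (k : ℕ) = 0 := by omega
        rw [hfe, Finset.card_empty, he2]
    · have hk' : (k : ℕ) ≤ n - 1 := by have := k.isLt; omega
      rw [hmemJ, if_neg hk] at hr
      have hrm := r.isLt
      have hfe : (J k).filter (fun j => (r : ℕ) < j)
          = Finset.Ico (m - (n - 1) + (k : ℕ)) m := by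
        ext j
        rw [Finset.mem_filter, hmemJ, if_neg hk, Finset.mem_Ico]
        omega
      rw [hfe, Nat.card_Ico]
      congr 1
      omega
  -- positivity of P k off its zero set
  have hsignP : ∀ (k : Fin (n + 1)) (r : Fin m), (r : ℕ) ∉ J k → 0 < (P k).eval (x r) := by
    intro k r hr
    rw [hevalP]
    have hxa : x r ∉ A k := fun hmem => hr ((hAmemx k r).mp hmem)
    have := aux_sign_prod (A k) (x r) hxa
    rw [hcount k r hr, hJfc k r hr] at this
    exact this
  -- zero set of P k
  have hPzero : ∀ (k : Fin (n + 1)) (y : ℝ), (P k).eval y = 0 ↔ y ∈ A k := by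
    intro k y
    rw [hevalP]
    rw [mul_eq_zero]
    constructor
    · rintro (h1 | h2)
      · exact absurd h1 (by positivity)
      · obtain ⟨z, hz, hz0⟩ := Finset.prod_eq_zero_iff.mp h2
        have : y = z := by linarith [sub_eq_zero.mp hz0]
        rwa [this]
    · intro hy
      exact Or.inr (Finset.prod_eq_zero hy (by ring))
  -- the functions on Ω
  let f : Fin (n + 1) → (Ω → ℝ) := fun k ω => (P k).eval (ω : ℝ)
  have hfnn : ∀ k (ω : Ω), 0 ≤ f k ω := by
    intro k ω
    obtain ⟨r, hrx⟩ := hxsurj (ω : ℝ) ω.2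
    show 0 ≤ (P k).eval (ω : ℝ)
    rw [← hrx]
    by_cases hr : (r : ℕ) ∈ J k
    · have : x r ∈ A k := (hAmemx k r).mpr hr
      rw [(hPzero k (x r)).mpr this]
    · exact le_of_lt (hsignP k r hr)
  -- the subspace and span equality
  obtain ⟨bb, hdegs, hli, hiff⟩ := h
  let T : Polynomial ℝ →ₗ[ℝ] (Ω → ℝ) :=
    { toFun := fun p ω => p.eval (ω : ℝ)
      map_add' := by intros; funext; simp
      map_smul' := by intros; funext; simp }
  let W : Submodule ℝ (Ω → ℝ) := Submodule.map T (Polynomial.degreeLT ℝ n)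
  have hdltmem : ∀ (p : Polynomial ℝ), p.natDegree ≤ n - 1 → p ∈ Polynomial.degreeLT ℝ n := by
    intro p hp
    rw [Polynomial.mem_degreeLT]
    calc p.degree ≤ (p.natDegree : WithBot ℕ) := Polynomial.degree_le_natDegree
      _ < (n : WithBot ℕ) := by
          rw [Nat.cast_lt]
          omega
  have hspanle : Submodule.span ℝ (Set.range bb) ≤ W := by
    rw [Submodule.span_le]
    rintro _ ⟨i, rfl⟩
    obtain ⟨p, hp, hpev⟩ := hdegs i
    exact ⟨p, hdltmem p (by omega), by funext ω; exact (hpev ω).symm⟩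
  have hFDdlt : FiniteDimensional ℝ (Polynomial.degreeLT ℝ n) :=
    Module.Finite.equiv (Polynomial.degreeLTEquiv ℝ n).symm
  have hfrdlt : Module.finrank ℝ (Polynomial.degreeLT ℝ n) = n := by
    rw [(Polynomial.degreeLTEquiv ℝ n).finrank_eq, Module.finrank_pi, Fintype.card_fin]
  have hWle : Module.finrank ℝ W ≤ n := le_trans (Submodule.finrank_map_le T _) (le_of_eq hfrdlt)
  have hsprank : Module.finrank ℝ (Submodule.span ℝ (Set.range bb)) = n := by
    rw [finrank_span_eq_card hli, Fintype.card_fin]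
  have hspan_eq : Submodule.span ℝ (Set.range bb) = W :=
    Submodule.eq_of_le_of_finrank_le hspanle (by rw [hsprank]; exact hWle)
  have hfmem : ∀ k, f k ∈ Submodule.span ℝ (Set.range bb) := by
    intro k
    rw [hspan_eq]
    exact ⟨P k, hdltmem (P k) (hdegP k), rfl⟩
  -- nonnegativity of the basis functions
  have hbnn : ∀ i (ω : Ω), 0 ≤ bb i ω := by
    intro i
    have hmem : bb i ∈ Submodule.span ℝ (Set.range bb) :=
      Submodule.subset_span (Set.mem_range_self i)
    have : bb i = ∑ l, (if l = i then (1 : ℝ) else 0) • bb l := by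
      rw [Finset.sum_congr rfl (fun l _ => by rw [ite_smul, one_smul, zero_smul]),
        Finset.sum_ite_eq' Finset.univ i bb]
      simp
    exact (hiff (bb i) hmem).mpr ⟨_, fun l => by positivity, this⟩
  -- coefficient representations
  have hck : ∀ k, ∃ c : Fin n → ℝ, (∀ i, 0 ≤ c i) ∧ f k = ∑ i, c i • bb i :=
    fun k => (hiff (f k) (hfmem k)).mp (hfnn k)
  choose c hc0 hcsum using hck
  -- where a coefficient is nonzero, the basis function vanishes on A k
  have hvanish : ∀ k i, c k i ≠ 0 → ∀ ω : Ω, (ω : ℝ) ∈ A k → bb i ω = 0 := by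
    intro k i hci ω hω
    have hfz : f k ω = 0 := (hPzero k (ω : ℝ)).mpr hω
    have hsum : ∑ l, c k l * bb l ω = 0 := by
      have := congrFun (hcsum k) ω
      rw [Finset.sum_apply] at this
      simp only [Pi.smul_apply, smul_eq_mul] at this
      rw [← this]
      exact hfz
    have hterm : ∀ l ∈ Finset.univ, 0 ≤ c k l * bb l ω :=
      fun l _ => mul_nonneg (hc0 k l) (hbnn l ω)
    have := (Finset.sum_eq_zero_iff_of_nonneg hterm).mp hsum i (Finset.mem_univ i)
    rcases mul_eq_zero.mp this with h1 | h2
    · exact absurd h1 hci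
    · exact h2
  -- at most one nonzero coefficient
  have hunique : ∀ k i j, c k i ≠ 0 → c k j ≠ 0 → i = j := by
    intro k i j hci hcj
    by_contra hij
    obtain ⟨pi, hpi, hpiev⟩ := hdegs i
    obtain ⟨pj, hpj, hpjev⟩ := hdegs j
    have hbbne : bb i ≠ 0 := hli.ne_zero i
    obtain ⟨ω0, hω0⟩ := Function.ne_iff.mp hbbne
    have hw : pi.eval (ω0 : ℝ) ≠ 0 := by rw [← hpiev ω0]; exact hω0
    have hpiZ : ∀ z ∈ A k, pi.eval z = 0 := by
      intro z hz
      have hzΩ : z ∈ Ω := hAsubΩ k z hz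
      have := hvanish k i hci ⟨z, hzΩ⟩ hz
      rwa [hpiev ⟨z, hzΩ⟩] at this
    have hpjZ : ∀ z ∈ A k, pj.eval z = 0 := by
      intro z hz
      have hzΩ : z ∈ Ω := hAsubΩ k z hz
      have := hvanish k j hcj ⟨z, hzΩ⟩ hz
      rwa [hpjev ⟨z, hzΩ⟩] at this
    have hlam := aux_two_polys pj pi (n - 1) (by omega) (by omega) (A k)
      (le_of_eq (hAcard k).symm) hpjZ hpiZ (ω0 : ℝ) hw
    set lam := pj.eval (ω0 : ℝ) / pi.eval (ω0 : ℝ) with hlamdef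
    have hbbrel : ∀ ω : Ω, bb j ω = lam * bb i ω := by
      intro ω
      rw [hpjev ω, hpiev ω]
      exact hlam (ω : ℝ)
    -- contradiction with linear independence
    have hgsum : ∑ l, ((if l = i then lam else 0) - (if l = j then (1 : ℝ) else 0)) • bb l = 0 := by
      have h1 : ∑ l, (if l = i then lam else 0) • bb l = lam • bb i := by
        rw [Finset.sum_congr rfl (fun l _ => by rw [ite_smul, zero_smul]),
          Finset.sum_ite_eq' Finset.univ i (fun l => lam • bb l)]
        simp
      have h2 : ∑ l, (if l = j then (1 : ℝ) else 0) • bb l = bb j := by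
        rw [Finset.sum_congr rfl (fun l _ => by rw [ite_smul, one_smul, zero_smul]),
          Finset.sum_ite_eq' Finset.univ j bb]
        simp
      rw [Finset.sum_congr rfl (fun l _ => sub_smul _ _ (bb l)), Finset.sum_sub_distrib, h1, h2]
      funext ω
      simp only [Pi.sub_apply, Pi.smul_apply, smul_eq_mul, Pi.zero_apply]
      rw [hbbrel ω]
      ring
    have := Fintype.linearIndependent_iff.mp hli _ hgsum j
    rw [if_neg (Ne.symm hij), if_pos rfl] at this
    norm_num at this
  -- existence of a nonzero coefficient
  have hex : ∀ k, ∃ i, c k i ≠ 0 := by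
    intro k
    by_contra hno
    push_neg at hno
    have hI : (I k)ᶜ.Nonempty := by
      rw [← Finset.card_pos, Finset.card_compl]
      have : (I k).card = n - 1 := by
        rw [show I k = (J k).attachFin (hJr k) from rfl, Finset.card_attachFin, hJcard]
      rw [this, Fintype.card_fin]
      omega
    obtain ⟨r, hr⟩ := hI
    rw [Finset.mem_compl] at hr
    have hrJ : (r : ℕ) ∉ J k := fun hmem => hr ((hmemI k r).mpr hmem)
    have hpos := hsignP k r hrJ
    have : f k ⟨x r, hxmem r⟩ = 0 := by
      have := congrFun (hcsum k) ⟨x r, hxmem r⟩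
      rw [Finset.sum_apply] at this
      simp only [Pi.smul_apply, smul_eq_mul] at this
      rw [this]
      exact Finset.sum_eq_zero (fun l _ => by rw [hno l, zero_mul])
    have : (P k).eval (x r) = 0 := this
    linarith
  choose i0 hi0 using hex
  -- pigeonhole
  obtain ⟨k, k', hkk', hik⟩ := Fintype.exists_ne_map_eq_of_card_lt i0
    (by rw [Fintype.card_fin, Fintype.card_fin]; omega)
  -- the zero sets agree
  have hcollapse : ∀ k, ∀ ω : Ω, f k ω = c k (i0 k) * bb (i0 k) ω := by
    intro k ω
    have := congrFun (hcsum k) ω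
    rw [Finset.sum_apply] at this
    simp only [Pi.smul_apply, smul_eq_mul] at this
    rw [this]
    apply Finset.sum_eq_single_of_mem (i0 k) (Finset.mem_univ _)
    intro l _ hl
    have : c k l = 0 := by
      by_contra hcl
      exact hl (hunique k l (i0 k) hcl (hi0 k))
    rw [this, zero_mul]
  have hAsub : ∀ k1 k2 : Fin (n + 1), i0 k1 = i0 k2 → A k1 ⊆ A k2 := by
    intro k1 k2 hi z hz
    have hzΩ : z ∈ Ω := hAsubΩ k1 z hz
    have h1 : f k1 ⟨z, hzΩ⟩ = 0 := (hPzero k1 z).mpr hz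
    have h2 : bb (i0 k1) ⟨z, hzΩ⟩ = 0 := by
      rw [hcollapse k1 ⟨z, hzΩ⟩] at h1
      rcases mul_eq_zero.mp h1 with h | h
      · exact absurd h (hi0 k1)
      · exact h
    have h3 : f k2 ⟨z, hzΩ⟩ = 0 := by
      rw [hcollapse k2 ⟨z, hzΩ⟩, ← hi, h2, mul_zero]
    exact (hPzero k2 z).mp h3
  have hAeq : A k = A k' := Finset.Subset.antisymm (hAsub k k' hik) (hAsub k' k hik.symm)
  -- hence the index sets agree
  have hJeq : J k = J k' := by
    ext j
    constructor
    · intro hj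
      have hjm : j < m := hJr k j hj
      have : x ⟨j, hjm⟩ ∈ A k := (hAmemx k ⟨j, hjm⟩).mpr hj
      rw [hAeq] at this
      exact (hAmemx k' ⟨j, hjm⟩).mp this
    · intro hj
      have hjm : j < m := hJr k' j hj
      have : x ⟨j, hjm⟩ ∈ A k' := (hAmemx k' ⟨j, hjm⟩).mpr hj
      rw [← hAeq] at this
      exact (hAmemx k ⟨j, hjm⟩).mp this
  -- but the index sets are pairwise distinct
  have hJne : ∀ k1 k2 : Fin (n + 1), (k1 : ℕ) < (k2 : ℕ) → J k1 ≠ J k2 := by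
    intro k1 k2 hlt heq
    have hk1n : (k1 : ℕ) ≠ n := by have := k2.isLt; omega
    by_cases hk2 : (k2 : ℕ) = n
    · by_cases hk1s : (k1 : ℕ) = n - 1
      · -- witness n - 1
        have h1 : (n - 1) ∈ J k2 := by
          rw [hmemJ, if_pos hk2]
          constructor
          · omega
          · omega
        have h2 : (n - 1) ∉ J k1 := by
          rw [hmemJ, if_neg hk1n]
          push_neg
          constructor
          · omega
          · intro hge
            omega
        rw [← heq] at h1
        exact h2 h1
      · -- witness m - 1
        have h1 : (m - 1) ∈ J k1 := by
          rw [hmemJ, if_neg hk1n]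
          right
          have := k1.isLt
          omega
        have h2 : (m - 1) ∉ J k2 := by
          rw [hmemJ, if_pos hk2]
          push_neg
          intro hne
          omega
        rw [heq] at h1
        exact h2 h1
    · -- witness k1
      have h1 : (k1 : ℕ) ∈ J k2 := by
        rw [hmemJ, if_neg hk2]
        left
        exact hlt
      have h2 : (k1 : ℕ) ∉ J k1 := by
        rw [hmemJ, if_neg hk1n]
        push_neg
        constructor
        · omega
        · intro hge
          omega
      rw [← heq] at h1
      exact h2 h1
  have hvne : (k : ℕ) ≠ (k' : ℕ) := fun hv => hkk' (Fin.ext hv)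
  rcases lt_or_gt_of_ne hvne with hlt | hlt
  · exact hJne k k' hlt hJeq
  · exact hJne k' k hlt hJeq.symm

/-- For finite compact `Ω` with `#Ω > n ≥ 3`, the minimal possible maximal degree of an
`n`-element positive basis of an `n`-dimensional subspace of polynomial functions on `Ω`
is `d_n(Ω) = n`. -/
theorem dn_finite_Omega (Ω : Set ℝ) (hc : IsCompact Ω) (hfin : Ω.Finite)
    (n : ℕ) (hn : 3 ≤ n) (hcard : n < Ω.ncard) :
    IsLeast {d | PosBasisWithDeg Ω n d} n := by
  constructor
  · exact part1 Ω hfin n hn hcard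
  · intro d hd
    by_contra hlt
    push_neg at hlt
    exact part2 Ω hfin n d hn hcard (by omega) hd
end

section
/- Let Ω ⊆ ℝ be compact with infinitely many connected components (equivalently λ(Ω) = ∞). Then for every n ≥ 3 we have d_n(Ω) = n: one can always find an n-dimensional subspace of polynomials of degree at most n on Ω with a positive basis, and n cannot be lowered. -/
/-!
A compact `Ω` with infinitely many components has arbitrarily many holes `(a, b)` with pairwise
disjoint closures, all to the right of `m = min Ω`.

Upper bound: write `n = e + 2h` with `e ≤ 1` and take as nodes the `2h` endpoints of `h` holes,
plus `m` if `e = 1`. Products of `X - m` and of quadratics `(X - c) (X - c')` with both roots in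
the closure of one hole are nonnegative on `Ω`; from them one builds, for each node, a polynomial
of degree `≤ n` that is positive at that node and vanishes at the others. Normalised, these form
a positive basis.

Lower bound: a positive basis of degree `< n` spans all polynomials of degree `< n`. Write
`n - 1 = e + 2h`; for each of `n + 1` disjoint blocks of `h` holes, `(X - m)^e ∏ (X - a) (X - b)`
is nonnegative on `Ω` with `n - 1` zeros there, so some basis element shares these zeros. Two
blocks share a basis element, which then has `n` zeros and degree `< n`.
-/

open Polynomial Set Function

structure IsHole (Ω : Set ℝ) (a b : ℝ) : Prop where
  left_mem : a ∈ Ω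
  right_mem : b ∈ Ω
  lt : a < b
  le_or_le : ∀ y ∈ Ω, y ≤ a ∨ b ≤ y

lemma IsHole.sub_mul_sub_nonneg {Ω : Set ℝ} {a b c c' y : ℝ} (hH : IsHole Ω a b)
    (hc : c ∈ Icc a b) (hc' : c' ∈ Icc a b) (hy : y ∈ Ω) : 0 ≤ (y - c) * (y - c') := by
  rcases hH.le_or_le y hy with h | h
  · exact mul_nonneg_of_nonpos_of_nonpos (by linarith [hc.1]) (by linarith [hc'.1])
  · exact mul_nonneg (by linarith [hc.2]) (by linarith [hc'.2])

lemma exists_isHole_between {Ω : Set ℝ} (hc : IsCompact Ω) {u v : ℝ} (hu : u ∈ Ω) (hv : v ∈ Ω)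
    (huv : u < v) (hcc : connectedComponentIn Ω u ≠ connectedComponentIn Ω v) :
    ∃ a b, IsHole Ω a b ∧ u ≤ a ∧ b ≤ v := by
  obtain ⟨z, ⟨huz, hzv⟩, hz⟩ : ∃ z ∈ Ioo u v, z ∉ Ω := by
    by_contra! h
    have hsub : Icc u v ⊆ Ω := by
      rw [← Ioc_insert_left huv.le, ← Ioo_insert_right huv]
      exact insert_subset hu (insert_subset hv h)
    exact hcc (connectedComponentIn_eq (isPreconnected_Icc.subset_connectedComponentIn
      (left_mem_Icc.2 huv.le) hsub (right_mem_Icc.2 huv.le)))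
  obtain ⟨a, ⟨haΩ, haz⟩, ha⟩ := (hc.inter_right isClosed_Iic).exists_isGreatest ⟨u, hu, huz.le⟩
  obtain ⟨b, ⟨hbΩ, hzb⟩, hb⟩ := (hc.inter_right isClosed_Ici).exists_isLeast ⟨v, hv, hzv.le⟩
  have hab : a < b := (lt_of_le_of_ne haz fun h => hz (by rwa [← h])).trans_le hzb
  refine ⟨a, b, ⟨haΩ, hbΩ, hab, fun y hy => ?_⟩, ha ⟨hu, huz.le⟩, hb ⟨hv, hzv.le⟩⟩
  rcases le_total y z with h | h
  · exact Or.inl (ha ⟨hy, h⟩)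
  · exact Or.inr (hb ⟨hy, h⟩)

lemma exists_strictMono_of_components_infinite {Ω : Set ℝ}
    (hcomp : {C : Set ℝ | ∃ x ∈ Ω, C = connectedComponentIn Ω x}.Infinite) (M : ℕ) :
    ∃ y : Fin M → ℝ, StrictMono y ∧ (∀ i, y i ∈ Ω) ∧
      Pairwise fun i j => connectedComponentIn Ω (y i) ≠ connectedComponentIn Ω (y j) := by
  obtain ⟨t, htΩ, hbij⟩ := Ω.exists_subset_bijOn (connectedComponentIn Ω)
  have ht : t.Infinite := fun hfin => hcomp <| by
    have himage := hfin.image (connectedComponentIn Ω)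
    rw [hbij.image_eq] at himage
    convert himage using 1
    ext C
    simp [eq_comm]
  obtain ⟨F, hFt, hcard⟩ := ht.exists_subset_card_eq M
  have hmem : ∀ i, F.orderEmbOfFin hcard i ∈ t := fun i => hFt (F.orderEmbOfFin_mem hcard i)
  exact ⟨F.orderEmbOfFin hcard, (F.orderEmbOfFin hcard).strictMono, fun i => htΩ (hmem i),
    fun i j hij hC => hij ((F.orderEmbOfFin hcard).injective (hbij.injOn (hmem i) (hmem j) hC))⟩

/-- A free family of holes `(a i, b i)` of `Ω` (closures pairwise disjoint), to the right of
`m = min Ω`. -/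
structure FreeHoles (Ω : Set ℝ) (m : ℝ) {ι : Type*} (a b : ι → ℝ) : Prop where
  isLeast : IsLeast Ω m
  isHole : ∀ i, IsHole Ω (a i) (b i)
  lt_left : ∀ i, m < a i
  separated : Pairwise fun i j => b i < a j ∨ b j < a i

lemma FreeHoles.comp {Ω : Set ℝ} {m : ℝ} {ι κ : Type*} {a b : ι → ℝ} (hF : FreeHoles Ω m a b)
    {f : κ → ι} (hf : Injective f) : FreeHoles Ω m (a ∘ f) (b ∘ f) :=
  ⟨hF.isLeast, fun i => hF.isHole (f i), fun i => hF.lt_left (f i),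
    fun _ _ hij => hF.separated (hf.ne hij)⟩

lemma exists_freeHoles {Ω : Set ℝ} (hc : IsCompact Ω)
    (hcomp : {C : Set ℝ | ∃ x ∈ Ω, C = connectedComponentIn Ω x}.Infinite)
    (ι : Type*) [Finite ι] : ∃ (m : ℝ) (a b : ι → ℝ), FreeHoles Ω m a b := by
  obtain ⟨N, ⟨e⟩⟩ := Finite.exists_equiv_fin ι
  obtain ⟨y, hy, hyΩ, hcc⟩ := exists_strictMono_of_components_infinite hcomp (2 * N + 2)
  -- the holes lie between `y (2k+1)` and `y (2k+2)`, so distinct holes are strictly separated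
  let u : Fin N → Fin (2 * N + 2) := fun k => ⟨2 * k + 1, by omega⟩
  let v : Fin N → Fin (2 * N + 2) := fun k => ⟨2 * k + 2, by omega⟩
  have hhole : ∀ k, ∃ a b, IsHole Ω a b ∧ y (u k) ≤ a ∧ b ≤ y (v k) := fun k =>
    exists_isHole_between hc (hyΩ _) (hyΩ _) (hy (by simp [u, v, Fin.lt_def]))
      (hcc (by simp [u, v, Fin.ext_iff]))
  choose a b hab hua hbv using hhole
  obtain ⟨m, hm⟩ := hc.exists_isLeast ⟨y 0, hyΩ 0⟩
  have hvu : ∀ k l : Fin N, k < l → b k < a l := fun k l hkl =>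
    calc b k ≤ y (v k) := hbv k
      _ < y (u l) := hy (by rw [Fin.lt_def] at hkl ⊢; simp only [u, v]; omega)
      _ ≤ a l := hua l
  have hF : FreeHoles Ω m a b := by
    refine ⟨hm, hab, fun k => ?_, fun k l hkl => ?_⟩
    · calc m ≤ y 0 := hm.2 (hyΩ 0)
        _ < y (u k) := hy (by simp [u, Fin.lt_def])
        _ ≤ a k := hua k
    · rcases lt_or_gt_of_ne hkl with h | h
      · exact Or.inl (hvu k l h)
      · exact Or.inr (hvu l k h)
  exact ⟨m, a ∘ e, b ∘ e, hF.comp e.injective⟩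

def endpoint {ι : Type*} (a b : ι → ℝ) (p : ι × Bool) : ℝ := bif p.2 then b p.1 else a p.1

def node {ι κ : Type*} (m : ℝ) (a b : ι → ℝ) : κ ⊕ ι × Bool → ℝ :=
  Sum.elim (fun _ => m) (endpoint a b)

namespace FreeHoles

variable {Ω : Set ℝ} {m : ℝ} {ι : Type*} {a b : ι → ℝ}

lemma endpoint_mem_Icc (hF : FreeHoles Ω m a b) (p : ι × Bool) :
    endpoint a b p ∈ Icc (a p.1) (b p.1) := by
  obtain ⟨i, _ | _⟩ := p <;> simp [endpoint, (hF.isHole i).lt.le]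

lemma endpoint_mem (hF : FreeHoles Ω m a b) (p : ι × Bool) : endpoint a b p ∈ Ω := by
  obtain ⟨i, _ | _⟩ := p
  · exact (hF.isHole i).left_mem
  · exact (hF.isHole i).right_mem

lemma lt_endpoint (hF : FreeHoles Ω m a b) (p : ι × Bool) : m < endpoint a b p :=
  (hF.lt_left p.1).trans_le (hF.endpoint_mem_Icc p).1

lemma endpoint_lt_or_lt (hF : FreeHoles Ω m a b) {p : ι × Bool} {i : ι} (hi : p.1 ≠ i) :
    endpoint a b p < a i ∨ b i < endpoint a b p := by
  have hp := hF.endpoint_mem_Icc p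
  rcases hF.separated hi with h | h
  · exact Or.inl (hp.2.trans_lt h)
  · exact Or.inr (h.trans_le hp.1)

lemma endpoint_injective (hF : FreeHoles Ω m a b) : Injective (endpoint a b) := by
  rintro ⟨i, s⟩ ⟨j, t⟩ h
  obtain rfl : i = j := by
    by_contra hij
    rcases hF.endpoint_lt_or_lt (p := (i, s)) hij with h' | h' <;>
      linarith [(hF.endpoint_mem_Icc (j, t)).1, (hF.endpoint_mem_Icc (j, t)).2]
  have := (hF.isHole i).lt
  cases s <;> cases t <;> simp_all [endpoint, this.ne, this.ne']

lemma node_mem (hF : FreeHoles Ω m a b) {κ : Type*} (j : κ ⊕ ι × Bool) : node m a b j ∈ Ω := by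
  cases j with
  | inl _ => exact hF.isLeast.1
  | inr p => exact hF.endpoint_mem p

lemma node_injective (hF : FreeHoles Ω m a b) {κ : Type*} [Subsingleton κ] :
    Injective (node m a b : κ ⊕ ι × Bool → ℝ) :=
  (injective_of_subsingleton _).sumElim hF.endpoint_injective fun _ p => (hF.lt_endpoint p).ne

end FreeHoles

noncomputable def holeProd {ι : Type*} (a b : ι → ℝ) (s : Finset ι) : ℝ[X] :=
  ∏ i ∈ s, (X - C (a i)) * (X - C (b i))

section holeProd

variable {ι : Type*} {a b : ι → ℝ} {s : Finset ι}

lemma natDegree_holeProd_le (a b : ι → ℝ) (s : Finset ι) :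
    (holeProd a b s).natDegree ≤ 2 * s.card := by
  have hquad : ∀ i ∈ s, ((X - C (a i)) * (X - C (b i))).natDegree ≤ 2 := fun i _ =>
    natDegree_mul_le_of_le (natDegree_X_sub_C_le _) (natDegree_X_sub_C_le _)
  refine (natDegree_prod_le s _).trans ((Finset.sum_le_sum hquad).trans ?_)
  rw [Finset.sum_const, smul_eq_mul, mul_comm]

lemma eval_holeProd_nonneg {Ω : Set ℝ} (hH : ∀ i, IsHole Ω (a i) (b i)) {y : ℝ} (hy : y ∈ Ω) :
    0 ≤ (holeProd a b s).eval y := by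
  rw [holeProd, eval_prod]
  refine Finset.prod_nonneg fun i _ => ?_
  simpa using (hH i).sub_mul_sub_nonneg (left_mem_Icc.2 (hH i).lt.le)
    (right_mem_Icc.2 (hH i).lt.le) hy

lemma eval_holeProd_endpoint {p : ι × Bool} (hp : p.1 ∈ s) :
    (holeProd a b s).eval (endpoint a b p) = 0 := by
  rw [holeProd, eval_prod]
  refine Finset.prod_eq_zero hp ?_
  obtain ⟨i, _ | _⟩ := p <;> simp [endpoint]

lemma eval_holeProd_pos (hab : ∀ i ∈ s, a i ≤ b i) {x : ℝ}
    (hx : ∀ i ∈ s, x < a i ∨ b i < x) : 0 < (holeProd a b s).eval x := by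
  rw [holeProd, eval_prod]
  refine Finset.prod_pos fun i hi => ?_
  have := hab i hi
  rcases hx i hi with h | h
  · simpa using mul_pos_of_neg_of_neg (by linarith : x - a i < 0) (by linarith : x - b i < 0)
  · simpa using mul_pos (by linarith : 0 < x - a i) (by linarith : 0 < x - b i)

end holeProd

lemma posBasisWithDeg_of_nodes_fin {Ω : Set ℝ} {n d : ℕ} (x : Fin n → ℝ) (hx : ∀ i, x i ∈ Ω)
    (P : Fin n → ℝ[X]) (hdeg : ∀ i, (P i).natDegree ≤ d)
    (hnonneg : ∀ i, ∀ y ∈ Ω, 0 ≤ (P i).eval y) (hzero : ∀ i j, i ≠ j → (P i).eval (x j) = 0)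
    (hpos : ∀ i, 0 < (P i).eval (x i)) :
    PosBasisWithDeg Ω n d := by
  let bb : Fin n → Ω → ℝ := fun i y => (P i).eval (y : ℝ) / (P i).eval (x i)
  have hbb : ∀ i j, bb i ⟨x j, hx j⟩ = if j = i then 1 else 0 := by
    intro i j
    split_ifs with h
    · subst h
      exact div_self (hpos j).ne'
    · simp [bb, hzero i j (Ne.symm h)]
  have hcoeff : ∀ (c : Fin n → ℝ) j, (∑ i, c i • bb i) ⟨x j, hx j⟩ = c j := by
    intro c j
    simp [Finset.sum_apply, hbb]
  refine ⟨bb, fun i => ⟨C ((P i).eval (x i))⁻¹ * P i, (natDegree_C_mul_le _ _).trans (hdeg i),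
    fun y => by simp [bb, div_eq_inv_mul]⟩, ?_, fun f hf => ⟨fun hf0 => ?_, ?_⟩⟩
  · refine Fintype.linearIndependent_iff.2 fun c hc j => ?_
    simpa [hcoeff] using congrFun hc ⟨x j, hx j⟩
  · obtain ⟨c, rfl⟩ := (Submodule.mem_span_range_iff_exists_fun ℝ).1 hf
    exact ⟨c, fun j => hcoeff c j ▸ hf0 _, rfl⟩
  · rintro ⟨c, hc, rfl⟩ y
    simp only [Finset.sum_apply, Pi.smul_apply, smul_eq_mul]
    exact Finset.sum_nonneg fun i _ =>
      mul_nonneg (hc i) (div_nonneg (hnonneg i y y.2) (hpos i).le)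

lemma posBasisWithDeg_of_nodes {Ω : Set ℝ} {ι : Type*} [Fintype ι] {n d : ℕ}
    (hn : Fintype.card ι = n) (x : ι → ℝ) (hx : ∀ i, x i ∈ Ω)
    (P : ι → ℝ[X]) (hdeg : ∀ i, (P i).natDegree ≤ d)
    (hnonneg : ∀ i, ∀ y ∈ Ω, 0 ≤ (P i).eval y) (hzero : ∀ i j, i ≠ j → (P i).eval (x j) = 0)
    (hpos : ∀ i, 0 < (P i).eval (x i)) :
    PosBasisWithDeg Ω n d := by
  subst hn
  let e := Fintype.equivFin ι
  exact posBasisWithDeg_of_nodes_fin (x ∘ e.symm) (fun _ => hx _) (P ∘ e.symm) (fun _ => hdeg _)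
    (fun _ => hnonneg _) (fun _ _ hij => hzero _ _ (e.symm.injective.ne hij)) (fun _ => hpos _)

/-- At an endpoint of the hole `(a k, b k)` the root at that endpoint is traded for the midpoint:
both roots of `(X - c) (X - (a k + b k) / 2)` lie in `[a k, b k]`, so this factor stays
nonnegative on `Ω`. -/
noncomputable def nodePoly {ι : Type*} [Fintype ι] [DecidableEq ι] (m : ℝ) (e : ℕ)
    (a b : ι → ℝ) : Fin e ⊕ ι × Bool → ℝ[X]
  | .inl _ => holeProd a b Finset.univ
  | .inr (k, s) => (X - C m) ^ e * ((X - C (endpoint a b (k, !s))) * (X - C ((a k + b k) / 2))) *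
      holeProd a b (Finset.univ.erase k)

section nodePoly

variable {Ω : Set ℝ} {ι : Type*} [Fintype ι] [DecidableEq ι] {m : ℝ} {e : ℕ} {a b : ι → ℝ}

lemma natDegree_nodePoly_le (j : Fin e ⊕ ι × Bool) :
    (nodePoly m e a b j).natDegree ≤ e + 2 * Fintype.card ι := by
  rcases j with _ | ⟨k, s⟩
  · exact (natDegree_holeProd_le a b _).trans (by simp)
  · have hk := Finset.card_erase_add_one (Finset.mem_univ k)
    have hprod := natDegree_holeProd_le a b (Finset.univ.erase k)
    refine (natDegree_mul_le_of_le (natDegree_mul_le_of_le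
      (natDegree_pow_le_of_le e (natDegree_X_sub_C_le m))
      (natDegree_mul_le_of_le (natDegree_X_sub_C_le _) (natDegree_X_sub_C_le _))) hprod).trans ?_
    rw [Finset.card_univ] at hk
    omega

lemma FreeHoles.eval_nodePoly_nonneg (hF : FreeHoles Ω m a b) (j : Fin e ⊕ ι × Bool) {y : ℝ}
    (hy : y ∈ Ω) : 0 ≤ (nodePoly m e a b j).eval y := by
  rcases j with _ | ⟨k, s⟩
  · exact eval_holeProd_nonneg hF.isHole hy
  · have hmid : (a k + b k) / 2 ∈ Icc (a k) (b k) := by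
      constructor <;> linarith [(hF.isHole k).lt]
    have hquad := (hF.isHole k).sub_mul_sub_nonneg (hF.endpoint_mem_Icc (k, !s)) hmid hy
    simp only [nodePoly, eval_mul, eval_pow, eval_sub, eval_X, eval_C]
    exact mul_nonneg (mul_nonneg (pow_nonneg (sub_nonneg.2 (hF.isLeast.2 hy)) e) hquad)
      (eval_holeProd_nonneg hF.isHole hy)

lemma eval_nodePoly_node (he : e ≤ 1) {i j : Fin e ⊕ ι × Bool} (hij : i ≠ j) :
    (nodePoly m e a b i).eval (node m a b j) = 0 := by
  rcases i with i | ⟨k, s⟩ <;> rcases j with j | ⟨l, t⟩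
  · have : Subsingleton (Fin e) := Fin.subsingleton_iff_le_one.2 he
    exact absurd (congrArg Sum.inl (Subsingleton.elim i j)) hij
  · exact eval_holeProd_endpoint (Finset.mem_univ l)
  · simp [nodePoly, node, zero_pow (Fin.pos j).ne']
  · simp only [nodePoly, node, Sum.elim_inr, eval_mul]
    by_cases hlk : l = k
    · obtain rfl : t = !s := by
        subst hlk; cases s <;> cases t <;> simp_all
      simp [hlk]
    · rw [eval_holeProd_endpoint (p := (l, t)) (Finset.mem_erase.2 ⟨hlk, Finset.mem_univ l⟩),
        mul_zero]

lemma FreeHoles.eval_nodePoly_node_pos (hF : FreeHoles Ω m a b) (j : Fin e ⊕ ι × Bool) :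
    0 < (nodePoly m e a b j).eval (node m a b j) := by
  rcases j with _ | ⟨k, s⟩
  · exact eval_holeProd_pos (fun i _ => (hF.isHole i).lt.le)
      fun i _ => Or.inl (hF.lt_left i)
  · have hab := (hF.isHole k).lt
    have hquad : 0 < (endpoint a b (k, s) - endpoint a b (k, !s)) *
        (endpoint a b (k, s) - (a k + b k) / 2) := by
      cases s
      · exact mul_pos_of_neg_of_neg (by simp [endpoint]; linarith) (by simp [endpoint]; linarith)
      · exact mul_pos (by simp [endpoint]; linarith) (by simp [endpoint]; linarith)
    simp only [nodePoly, node, Sum.elim_inr, eval_mul, eval_pow, eval_sub, eval_X, eval_C]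
    refine mul_pos (mul_pos (pow_pos (sub_pos.2 (hF.lt_endpoint _)) e) hquad)
      (eval_holeProd_pos (fun i _ => (hF.isHole i).lt.le) fun i hi => ?_)
    exact hF.endpoint_lt_or_lt (Ne.symm (Finset.ne_of_mem_erase hi))

end nodePoly

theorem FreeHoles.posBasisWithDeg {Ω : Set ℝ} {ι : Type*} [Fintype ι] {m : ℝ} {a b : ι → ℝ}
    (hF : FreeHoles Ω m a b) {e : ℕ} (he : e ≤ 1) :
    PosBasisWithDeg Ω (e + 2 * Fintype.card ι) (e + 2 * Fintype.card ι) := by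
  classical
  exact posBasisWithDeg_of_nodes (by simp [mul_comm]) (node m a b) hF.node_mem
    (nodePoly m e a b) natDegree_nodePoly_le (fun j _ => hF.eval_nodePoly_nonneg j)
    (fun _ _ hij => eval_nodePoly_node he hij) hF.eval_nodePoly_node_pos

noncomputable def holePoly {ι : Type*} [Fintype ι] (m : ℝ) (e : ℕ) (a b : ι → ℝ) : ℝ[X] :=
  (X - C m) ^ e * holeProd a b Finset.univ

section holePoly

variable {Ω : Set ℝ} {ι : Type*} [Fintype ι] {m : ℝ} {e : ℕ} {a b : ι → ℝ}

lemma natDegree_holePoly_le : (holePoly m e a b).natDegree ≤ e + 2 * Fintype.card ι :=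
  natDegree_mul_le_of_le ((natDegree_pow_le_of_le e (natDegree_X_sub_C_le m)).trans_eq (mul_one e))
    (natDegree_holeProd_le a b _)

lemma FreeHoles.eval_holePoly_nonneg (hF : FreeHoles Ω m a b) {y : ℝ} (hy : y ∈ Ω) :
    0 ≤ (holePoly m e a b).eval y := by
  simp only [holePoly, eval_mul, eval_pow, eval_sub, eval_X, eval_C]
  exact mul_nonneg (pow_nonneg (sub_nonneg.2 (hF.isLeast.2 hy)) e)
    (eval_holeProd_nonneg hF.isHole hy)

lemma eval_holePoly_node (j : Fin e ⊕ ι × Bool) : (holePoly m e a b).eval (node m a b j) = 0 := by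
  rcases j with j | p
  · simp [holePoly, node, zero_pow (Fin.pos j).ne']
  · simp [holePoly, node, eval_holeProd_endpoint (Finset.mem_univ p.1)]

lemma FreeHoles.eval_holePoly_pos (hF : FreeHoles Ω m a b) {x : ℝ} (hmx : m < x)
    (hx : ∀ i, x < a i ∨ b i < x) : 0 < (holePoly m e a b).eval x := by
  simp only [holePoly, eval_mul, eval_pow, eval_sub, eval_X, eval_C]
  exact mul_pos (pow_pos (sub_pos.2 hmx) e)
    (eval_holeProd_pos (fun i _ => (hF.isHole i).lt.le) fun i _ => hx i)

end holePoly

lemma FreeHoles.eq_zero_of_eval_node_eq_zero {Ω : Set ℝ} {ι : Type*} [Fintype ι] {m : ℝ}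
    {a b : ι → ℝ} (hF : FreeHoles Ω m a b) {e : ℕ} (he : e ≤ 1) {x : ℝ} (hmx : m < x)
    (hx : ∀ i, x < a i ∨ b i < x) {p : ℝ[X]} (hp : p.natDegree < e + 2 * Fintype.card ι + 1)
    (hnode : ∀ j : Fin e ⊕ ι × Bool, p.eval (node m a b j) = 0) (hpx : p.eval x = 0) :
    p = 0 := by
  have : Subsingleton (Fin e) := Fin.subsingleton_iff_le_one.2 he
  have hinj : Injective fun o : Option (Fin e ⊕ ι × Bool) => o.elim x (node m a b) := by
    refine Option.injective_iff.2 ⟨hF.node_injective, ?_⟩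
    rintro ⟨j | ⟨i, s⟩, hj⟩
    · exact hmx.ne hj
    · change endpoint a b (i, s) = x at hj
      rcases hx i with h | h <;>
        linarith [(hF.endpoint_mem_Icc (i, s)).1, (hF.endpoint_mem_Icc (i, s)).2, hj]
  refine eq_zero_of_natDegree_lt_card_of_eval_eq_zero p hinj (fun o => ?_) ?_
  · cases o
    · exact hpx
    · exact hnode _
  · simpa [mul_comm] using hp

lemma exists_forall_eq_zero_of_sum_smul {α ι : Type*} [Fintype ι] {g : ι → α → ℝ} {c : ι → ℝ}
    (hc : ∀ i, 0 ≤ c i) (hg : ∀ i x, 0 ≤ g i x) (hne : ∑ i, c i • g i ≠ 0) :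
    ∃ i, ∀ x, (∑ i, c i • g i) x = 0 → g i x = 0 := by
  obtain ⟨i, hi⟩ : ∃ i, c i ≠ 0 := by
    by_contra! h
    exact hne (by simp [h])
  refine ⟨i, fun x hx => ?_⟩
  rw [Finset.sum_apply] at hx
  have := (Finset.sum_eq_zero_iff_of_nonneg fun j _ => mul_nonneg (hc j) (hg j x)).1 hx i
    (Finset.mem_univ i)
  exact (mul_eq_zero.1 this).resolve_left hi

lemma PosBasisWithDeg.exists_common_zeros {Ω : Set ℝ} {n d : ℕ} (hPB : PosBasisWithDeg Ω n d)
    (hd : d < n) :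
    ∃ p : Fin n → ℝ[X], (∀ t, (p t).natDegree ≤ d) ∧ (∀ t, ∃ y ∈ Ω, (p t).eval y ≠ 0) ∧
      ∀ q : ℝ[X], q.natDegree < n → (∀ y ∈ Ω, 0 ≤ q.eval y) → (∃ y ∈ Ω, q.eval y ≠ 0) →
        ∃ t, ∀ y ∈ Ω, q.eval y = 0 → (p t).eval y = 0 := by
  obtain ⟨bb, hpoly, hli, hcone⟩ := hPB
  choose p hpdeg hpeval using hpoly
  let ρ : ℝ[X] →ₗ[ℝ] Ω → ℝ := LinearMap.pi fun y : Ω => leval (y : ℝ)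
  have hρ : ∀ t, bb t = ρ (p t) := fun t => funext (hpeval t)
  have hmemV : ∀ q : ℝ[X], q.natDegree < n → ρ q ∈ (degreeLT ℝ n).map ρ := fun q hq =>
    ⟨q, mem_degreeLT.2 ((degree_le_natDegree).trans_lt (by exact_mod_cast hq)), rfl⟩
  have hspan : Submodule.span ℝ (range bb) = (degreeLT ℝ n).map ρ := by
    refine Submodule.eq_of_le_of_finrank_le (Submodule.span_le.2 ?_) ?_
    · rintro _ ⟨t, rfl⟩
      exact hρ t ▸ hmemV _ ((hpdeg t).trans_lt hd)
    · rw [finrank_span_eq_card hli, Fintype.card_fin]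
      refine (Submodule.finrank_map_le ρ _).trans ?_
      rw [(degreeLTEquiv ℝ n).finrank_eq, Module.finrank_fin_fun]
  have hbb_nonneg : ∀ t y, 0 ≤ bb t y := by
    intro t
    refine (hcone (bb t) (Submodule.subset_span ⟨t, rfl⟩)).2 ⟨Pi.single t 1, fun i => ?_, ?_⟩
    · rcases eq_or_ne i t with rfl | h <;> simp [*]
    · simp [Pi.single_apply]
  refine ⟨p, hpdeg, fun t => ?_, fun q hq hnonneg hne => ?_⟩
  · by_contra! h
    exact hli.ne_zero t (by rw [hρ]; ext y; exact h y y.2)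
  · obtain ⟨c, hc, hqc⟩ := (hcone (ρ q) (hspan ▸ hmemV q hq)).1 fun y => hnonneg y y.2
    obtain ⟨y, hy, hqy⟩ := hne
    obtain ⟨t, ht⟩ := exists_forall_eq_zero_of_sum_smul hc hbb_nonneg
      (hqc ▸ fun h => hqy (congrFun h ⟨y, hy⟩))
    refine ⟨t, fun z hz hqz => ?_⟩
    rw [← hpeval t ⟨z, hz⟩]
    exact ht ⟨z, hz⟩ (hqc ▸ hqz)

theorem FreeHoles.le_of_posBasisWithDeg {Ω : Set ℝ} {β : Type*} [Fintype β] {e h d : ℕ}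
    (he : e ≤ 1) (hh : 0 < h) {m : ℝ} {a b : β × Fin h → ℝ} (hF : FreeHoles Ω m a b)
    (hβ : e + 2 * h + 1 < Fintype.card β) (hPB : PosBasisWithDeg Ω (e + 2 * h + 1) d) :
    e + 2 * h + 1 ≤ d := by
  by_contra! hd
  obtain ⟨p, hpdeg, hpne, hp⟩ := hPB.exists_common_zeros hd
  have hblock : ∀ k, FreeHoles Ω m (a ∘ Prod.mk k) (b ∘ Prod.mk k) := fun k =>
    hF.comp (Prod.mk_right_injective k)
  let x : β → ℝ := fun k' => a (k', ⟨0, hh⟩)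
  have hx : ∀ {k k'}, k ≠ k' → m < x k' ∧ ∀ i, x k' < a (k, i) ∨ b (k, i) < x k' :=
    fun hkk' => ⟨hF.lt_left _, fun _ => hF.endpoint_lt_or_lt (p := (_, false))
      fun h => hkk' (congrArg Prod.fst h).symm⟩
  have : Nontrivial β := Fintype.one_lt_card_iff_nontrivial.1 (by omega)
  have hzeros : ∀ k, ∃ t, ∀ y ∈ Ω,
      (holePoly m e (a ∘ Prod.mk k) (b ∘ Prod.mk k)).eval y = 0 → (p t).eval y = 0 := by
    intro k
    obtain ⟨k', hk'⟩ := exists_ne k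
    obtain ⟨hmx, hxk⟩ := hx hk'.symm
    refine hp _ (natDegree_holePoly_le.trans_lt (by simp))
      (fun y hy => (hblock k).eval_holePoly_nonneg hy)
      ⟨x k', (hF.isHole _).left_mem, ((hblock k).eval_holePoly_pos hmx hxk).ne'⟩
  choose t ht using hzeros
  obtain ⟨k, k', hkk', htk⟩ := Fintype.exists_ne_map_eq_of_card_lt t (by simpa using hβ)
  have hxk : (p (t k)).eval (x k') = 0 := htk ▸
    ht k' (node m (a ∘ Prod.mk k') (b ∘ Prod.mk k') (.inr (⟨0, hh⟩, false)))
      ((hblock k').node_mem _) (eval_holePoly_node _)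
  obtain ⟨y, -, hpy⟩ := hpne (t k)
  refine hpy ?_
  rw [(hblock k).eq_zero_of_eval_node_eq_zero he (hx hkk').1 (hx hkk').2
    ((hpdeg _).trans_lt (by simpa using hd))
    (fun j => ht k _ ((hblock k).node_mem j) (eval_holePoly_node j)) hxk, eval_zero]

/-- If compact `Ω ⊆ ℝ` has infinitely many connected components (`λ(Ω) = ∞`), then for
every `n ≥ 3` we have `d_n(Ω) = n`. -/
theorem dn_lambda_infinite (Ω : Set ℝ) (hc : IsCompact Ω)
    (hcomp : {C : Set ℝ | ∃ x ∈ Ω, C = connectedComponentIn Ω x}.Infinite)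
    (n : ℕ) (hn : 3 ≤ n) :
    IsLeast {d | PosBasisWithDeg Ω n d} n := by
  refine ⟨?_, fun d hd => ?_⟩
  · obtain ⟨m, a, b, hF⟩ := exists_freeHoles hc hcomp (Fin (n / 2))
    have := hF.posBasisWithDeg (e := n % 2) (by omega)
    rwa [Fintype.card_fin, Nat.mod_add_div] at this
  · obtain ⟨m, a, b, hF⟩ := exists_freeHoles hc hcomp (Fin (n + 1) × Fin ((n - 1) / 2))
    have hn' : (n - 1) % 2 + 2 * ((n - 1) / 2) + 1 = n := by omega
    have := hF.le_of_posBasisWithDeg (by omega) (by omega) (by rw [Fintype.card_fin]; omega)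
      (hn' ▸ hd)
    rwa [hn'] at this
end
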